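/- arXiv:2203.04202 — 7 statements merged into one kernel-verified Lean document; each statement's English description precedes it below -/
import Mathlib

section
/- Let F be a finite field, let I be a finite index set, and let (A_α)_{α∈I} be a tuple of alternating n×n matrices over F. Then (A_α)_{α∈I} is indecomposable under simultaneous congruence if and only if every matrix E ∈ M_{n×n}(F) satisfying A_α E = Eᵀ A_α for all α ∈ I is either nilpotent or invertible. -/
/-!
For `m` large, Fitting's lemma splits `Kⁿ` as `ker Eᵐ ⊕ range Eᵐ`, both summands nonzero as soon
as `E` is neither nilpotent nor invertible. When `Aₐ E = Eᵀ Aₐ`, the relation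
`x ⬝ Aₐ (Eᵐ y) = (Eᵐ x) ⬝ Aₐ y` makes the two summands orthogonal for every `Aₐ`, so a basis
adapted to the splitting block-diagonalises the whole tuple. Conversely, the projection onto the
first block of a block-diagonal form, transported back through the congruence, is a self-adjoint
idempotent different from `0` and `1`, hence neither nilpotent nor invertible.
-/

open Matrix

namespace Stmt3

/-- An alternating square matrix. -/
def IsAltMat {F : Type*} [Ring F] {m : Type*} (A : Matrix m m F) : Prop :=
  Aᵀ = -A ∧ ∀ i, A i i = 0

/-- A tuple of `n×n` matrices is decomposable under simultaneous congruence if it is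
simultaneously congruent to a tuple of block-diagonal matrices with two diagonal
blocks of fixed sizes `n₁, n₂ ≥ 1` with `n₁ + n₂ = n`. -/
def Decomposable {F : Type*} [CommRing F] {ι : Type*} {n : ℕ}
    (A : ι → Matrix (Fin n) (Fin n) F) : Prop :=
  ∃ n₁ n₂ : ℕ, 1 ≤ n₁ ∧ 1 ≤ n₂ ∧ n₁ + n₂ = n ∧
    ∃ Q : Matrix (Fin n) (Fin n) F, IsUnit Q ∧
      ∀ (i : ι) (k l : Fin n),
        ((k.val < n₁ ∧ n₁ ≤ l.val) ∨ (l.val < n₁ ∧ n₁ ≤ k.val)) →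
          (Q * A i * Qᵀ) k l = 0

end Stmt3

theorem Module.End.exists_isCompl_ker_pow_range_pow_ne_bot {R M : Type*} [Ring R]
    [AddCommGroup M] [Module R M] [IsNoetherian R M] [IsArtinian R M] {f : Module.End R M}
    (hnil : ¬IsNilpotent f) (hunit : ¬IsUnit f) :
    ∃ m, IsCompl (LinearMap.ker (f ^ m)) (LinearMap.range (f ^ m)) ∧
      LinearMap.ker (f ^ m) ≠ ⊥ ∧ LinearMap.range (f ^ m) ≠ ⊥ := by
  obtain ⟨m, hm⟩ := Filter.eventually_atTop.mp f.eventually_isCompl_ker_pow_range_pow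
  refine ⟨m + 1, hm _ m.le_succ, fun hker => hunit ?_, fun hrange => hnil ⟨m + 1, ?_⟩⟩
  · have hinj : Function.Injective f := by
      rw [← LinearMap.ker_eq_bot, eq_bot_iff, ← hker, pow_succ]
      exact LinearMap.ker_le_ker_comp f (f ^ m)
    exact (Module.End.isUnit_iff f).mpr (IsArtinian.bijective_of_injective_endomorphism f hinj)
  · exact LinearMap.range_eq_bot.mp hrange

theorem IsIdempotentElem.mul_mul_invOf {M : Type*} [Monoid M] {e : M} (he : IsIdempotentElem e)
    (p : M) [Invertible p] : IsIdempotentElem (p * e * ⅟p) := by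
  simp only [IsIdempotentElem, mul_assoc, invOf_mul_cancel_left]
  rw [← mul_assoc e, he.eq]

namespace Matrix

section CommRing

variable {K : Type*} [CommRing K] {m : Type*} [Fintype m]

theorem mul_pow_eq_transpose_pow_mul [DecidableEq m] {A E : Matrix m m K}
    (h : A * E = Eᵀ * A) (k : ℕ) : A * E ^ k = (E ^ k)ᵀ * A := by
  induction k with
  | zero => simp
  | succ k ih =>
    rw [pow_succ, ← Matrix.mul_assoc, ih, Matrix.mul_assoc, h, ← Matrix.mul_assoc,
      ← transpose_mul, pow_mul_comm']

theorem dotProduct_mulVec_mulVec_of_mul_eq_transpose_mul {A E : Matrix m m K}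
    (h : A * E = Eᵀ * A) (x y : m → K) :
    x ⬝ᵥ A *ᵥ (E *ᵥ y) = (E *ᵥ x) ⬝ᵥ A *ᵥ y := by
  rw [mulVec_mulVec, h, ← mulVec_mulVec, dotProduct_mulVec, vecMul_transpose]

theorem commute_diagonal_of_apply_eq_zero [DecidableEq m] {B : Matrix m m K}
    {d : m → K} (hB : ∀ k l, d k ≠ d l → B k l = 0) : Commute B (diagonal d) := by
  ext k l
  rw [mul_diagonal, diagonal_mul]
  by_cases hkl : d k = d l
  · rw [hkl, mul_comm]
  · simp [hB k l hkl]

theorem mul_eq_transpose_mul_of_congr [DecidableEq m] {A D P : Matrix m m K}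
    [Invertible P] (h : Pᵀ * A * P * D = Dᵀ * (Pᵀ * A * P)) :
    A * (P * D * ⅟P) = (P * D * ⅟P)ᵀ * A := by
  calc A * (P * D * ⅟P) = (⅟P)ᵀ * (Pᵀ * A * P * D) * ⅟P := by
        simp only [Matrix.mul_assoc, ← Matrix.mul_assoc (⅟P)ᵀ, ← transpose_mul, mul_invOf_self,
          transpose_one, Matrix.one_mul]
    _ = (⅟P)ᵀ * (Dᵀ * (Pᵀ * A * P)) * ⅟P := by rw [h]
    _ = (P * D * ⅟P)ᵀ * A := by
        simp only [transpose_mul, Matrix.mul_assoc, mul_invOf_self, Matrix.mul_one]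

end CommRing

theorem exists_isUnit_rows_mem_of_isCompl {K : Type*} [Field K] {n : ℕ}
    {p q : Submodule K (Fin n → K)} (h : IsCompl p q) :
    ∃ Q : Matrix (Fin n) (Fin n) K, IsUnit Q ∧ ∀ k : Fin n,
      (k.val < Module.finrank K p → Q k ∈ p) ∧ (Module.finrank K p ≤ k.val → Q k ∈ q) := by
  have hdim : Module.finrank K p + Module.finrank K q = n := by
    rw [Submodule.finrank_add_eq_of_isCompl h, Module.finrank_fin_fun]
  let e : Fin (Module.finrank K p) ⊕ Fin (Module.finrank K q) ≃ Fin n :=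
    finSumFinEquiv.trans (finCongr hdim)
  let b : Module.Basis (Fin n) K (Fin n → K) :=
    (((Module.finBasis K p).prod (Module.finBasis K q)).map
      (Submodule.prodEquivOfIsCompl p q h)).reindex e
  refine ⟨of b, linearIndependent_rows_iff_isUnit.mp b.linearIndependent, fun k => ?_⟩
  change (_ → b k ∈ p) ∧ (_ → b k ∈ q)
  obtain ⟨j | j, rfl⟩ := e.surjective k
  · have hb : b (e (.inl j)) = Module.finBasis K p j := by simp [b]
    have hj : (e (.inl j)).val = j.val := rfl
    rw [hb, hj]
    exact ⟨fun _ => Submodule.coe_mem _, fun _ => by omega⟩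
  · have hb : b (e (.inr j)) = Module.finBasis K q j := by simp [b]
    have hj : (e (.inr j)).val = Module.finrank K p + j.val := rfl
    rw [hb, hj]
    exact ⟨fun _ => by omega, fun _ => Submodule.coe_mem _⟩

end Matrix

namespace Stmt3

section Field

variable {K : Type*} [Field K] {ι : Type*} {n : ℕ} {A : ι → Matrix (Fin n) (Fin n) K}

theorem decomposable_of_isCompl {p q : Submodule K (Fin n → K)} (h : IsCompl p q)
    (hp : p ≠ ⊥) (hq : q ≠ ⊥)
    (horth : ∀ i, ∀ x ∈ p, ∀ y ∈ q, x ⬝ᵥ A i *ᵥ y = 0 ∧ y ⬝ᵥ A i *ᵥ x = 0) :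
    Decomposable A := by
  obtain ⟨Q, hQ, hrows⟩ := exists_isUnit_rows_mem_of_isCompl h
  refine ⟨_, _, Submodule.one_le_finrank_iff.mpr hp, Submodule.one_le_finrank_iff.mpr hq,
    by rw [Submodule.finrank_add_eq_of_isCompl h, Module.finrank_fin_fun], Q, hQ, ?_⟩
  intro i k l hkl
  rw [mul_mul_apply, transpose_transpose]
  rcases hkl with ⟨hk, hl⟩ | ⟨hl, hk⟩
  · exact (horth i _ ((hrows k).1 hk) _ ((hrows l).2 hl)).1
  · exact (horth i _ ((hrows l).1 hl) _ ((hrows k).2 hk)).2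

theorem decomposable_of_not_isNilpotent_of_not_isUnit {E : Matrix (Fin n) (Fin n) K}
    (hE : ∀ i, A i * E = Eᵀ * A i) (hnil : ¬IsNilpotent E) (hunit : ¬IsUnit E) :
    Decomposable A := by
  obtain ⟨m, hcompl, hker, hrange⟩ := Module.End.exists_isCompl_ker_pow_range_pow_ne_bot
    (f := E.toLin') (by rwa [isNilpotent_toLin'_iff]) (by rwa [isUnit_toLin'_iff])
  refine decomposable_of_isCompl hcompl hker hrange fun i x hx y hy => ?_
  rw [← toLin'_pow, LinearMap.mem_ker, toLin'_apply] at hx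
  obtain ⟨z, rfl⟩ := hy
  rw [← toLin'_pow, toLin'_apply]
  have hEm :=
    dotProduct_mulVec_mulVec_of_mul_eq_transpose_mul (mul_pow_eq_transpose_pow_mul (hE i) m)
  exact ⟨by rw [hEm, hx, zero_dotProduct], by rw [← hEm, hx, mulVec_zero, dotProduct_zero]⟩

end Field

theorem exists_isIdempotentElem_of_decomposable {K : Type*} [CommRing K] [Nontrivial K]
    {ι : Type*} {n : ℕ} {A : ι → Matrix (Fin n) (Fin n) K} (h : Decomposable A) :
    ∃ E : Matrix (Fin n) (Fin n) K, (∀ i, A i * E = Eᵀ * A i) ∧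
      IsIdempotentElem E ∧ E ≠ 0 ∧ E ≠ 1 := by
  obtain ⟨n₁, n₂, h₁, h₂, hn, Q, hQ, hblock⟩ := h
  have := hQ.invertible
  let D : Matrix (Fin n) (Fin n) K := diagonal fun l => if l.val < n₁ then 1 else 0
  have hD : ∀ i, Qᵀᵀ * A i * Qᵀ * D = Dᵀ * (Qᵀᵀ * A i * Qᵀ) := fun i => by
    rw [diagonal_transpose, transpose_transpose]
    refine commute_diagonal_of_apply_eq_zero fun k l hkl => hblock i k l ?_
    by_contra! hsame
    split_ifs at hkl <;> first | exact hkl rfl | omega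
  have hDD : IsIdempotentElem D := by
    rw [IsIdempotentElem, diagonal_mul_diagonal]
    congr 1
    ext l
    split_ifs <;> simp
  refine ⟨Qᵀ * D * ⅟Qᵀ, fun i => mul_eq_transpose_mul_of_congr (hD i), hDD.mul_mul_invOf _,
    fun h0 => ?_, fun h1 => ?_⟩
  · have := congr((⅟Qᵀ * $h0 * Qᵀ) ⟨0, by omega⟩ ⟨0, by omega⟩)
    simp [Matrix.mul_assoc, D] at this
    omega
  · have := congr((⅟Qᵀ * $h1 * Qᵀ) ⟨n₁, by omega⟩ ⟨n₁, by omega⟩)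
    simp [Matrix.mul_assoc, D] at this

theorem fitting_lemma_general {F : Type*} [Field F] {ι : Type*}
    {n : ℕ} (A : ι → Matrix (Fin n) (Fin n) F) :
    ¬ Decomposable A ↔
      ∀ E : Matrix (Fin n) (Fin n) F,
        (∀ i, A i * E = Eᵀ * A i) → (IsNilpotent E ∨ IsUnit E) := by
  refine ⟨fun hA E hE => ?_, fun h hA => ?_⟩
  · by_contra! hE'
    exact hA (decomposable_of_not_isNilpotent_of_not_isUnit hE hE'.1 hE'.2)
  · obtain ⟨E, hE, hidem, hE0, hE1⟩ := exists_isIdempotentElem_of_decomposable hA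
    rcases h E hE with hnil | hunit
    · exact hE0 (hidem.eq_zero_of_isNilpotent hnil)
    · exact hE1 ((IsIdempotentElem.iff_eq_one_of_isUnit hunit).mp hidem)

/-- Fitting's lemma for tuples of alternating matrices over a finite field: a tuple is
indecomposable under simultaneous congruence iff every self-adjoint endomorphism of
the tuple is either nilpotent or invertible. -/
theorem fitting_lemma {F : Type*} [Field F] [Fintype F] {ι : Type*} [Fintype ι]
    {n : ℕ} (A : ι → Matrix (Fin n) (Fin n) F) (halt : ∀ i, IsAltMat (A i)) :
    ¬ Decomposable A ↔
      ∀ E : Matrix (Fin n) (Fin n) F,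
        (∀ i, A i * E = Eᵀ * A i) → (IsNilpotent E ∨ IsUnit E) :=
  fitting_lemma_general A

end Stmt3
end

section
/- For every natural number n ≥ 4 define Γ ∈ M_{n×n}(ZMod 2) by Γ_{ij} = 1 if |i − j| = 1 and Γ_{ij} = 0 otherwise (the adjacency matrix of the path graph on n vertices), partition {1, …, n} into the four parties α_j = {i : i ≡ j (mod 4)} for j ∈ {1, 2, 3, 4}, and define C_j ∈ M_{n×n}(ZMod 2) by (C_j)_{ik} = Γ_{ik} if exactly one of i, k lies in α_j, and (C_j)_{ik} = 0 otherwise. Then the 4-tuple (C_1, C_2, C_3, C_4) is indecomposable under simultaneous congruence. -/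
open Matrix

namespace Stmt4

/-- Adjacency matrix of the path graph on `n` vertices over `ZMod 2`:
`Γ_{ij} = 1` iff `|i − j| = 1`. -/
def pathAdj (n : ℕ) : Matrix (Fin n) (Fin n) (ZMod 2) :=
  fun i j => if i.val + 1 = j.val ∨ j.val + 1 = i.val then 1 else 0

/-- The commutation matrices of the 4-partite spiral graph state: vertex `i` (0-based,
corresponding to vertex `i+1` in 1-based labelling) belongs to party `p` (0-based,
corresponding to party `p+1 ∈ {1,2,3,4}`) iff `i ≡ p (mod 4)`; `(C_p)_{ik} = Γ_{ik}`
if exactly one of `i, k` lies in party `p`, and `0` otherwise. -/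
def spiralC (n : ℕ) (p : Fin 4) : Matrix (Fin n) (Fin n) (ZMod 2) :=
  fun i k =>
    if (i.val % 4 = p.val ∧ ¬ k.val % 4 = p.val) ∨
        (k.val % 4 = p.val ∧ ¬ i.val % 4 = p.val) then
      pathAdj n i k
    else 0

/-- Decomposability under simultaneous congruence. -/
def Decomposable {F : Type*} [CommRing F] {ι : Type*} {n : ℕ}
    (A : ι → Matrix (Fin n) (Fin n) F) : Prop :=
  ∃ n₁ n₂ : ℕ, 1 ≤ n₁ ∧ 1 ≤ n₂ ∧ n₁ + n₂ = n ∧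
    ∃ Q : Matrix (Fin n) (Fin n) F, IsUnit Q ∧
      ∀ (i : ι) (k l : Fin n),
        ((k.val < n₁ ∧ n₁ ≤ l.val) ∨ (l.val < n₁ ∧ n₁ ≤ k.val)) →
          (Q * A i * Qᵀ) k l = 0

/-! ### Auxiliary machinery for the proof -/

/-- adjacency-with-party coefficient -/
def g (p a b : ℕ) : ZMod 2 :=
  if ((a+1 = b ∨ b+1 = a) ∧ ((a%4 = p ∧ ¬ b%4 = p) ∨ (b%4 = p ∧ ¬ a%4 = p))) then 1 else 0

lemma g_one {p a b : ℕ}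
    (h : (a+1 = b ∨ b+1 = a) ∧ ((a%4 = p ∧ ¬ b%4 = p) ∨ (b%4 = p ∧ ¬ a%4 = p))) :
    g p a b = 1 := if_pos h

lemma g_zero {p a b : ℕ}
    (h : ¬((a+1 = b ∨ b+1 = a) ∧ ((a%4 = p ∧ ¬ b%4 = p) ∨ (b%4 = p ∧ ¬ a%4 = p)))) :
    g p a b = 0 := if_neg h

lemma g_symm (p a b : ℕ) : g p a b = g p b a := by
  unfold g
  apply if_congr _ rfl rfl
  tauto

lemma sum_two {m : ℕ} {f : ℕ → ZMod 2} {a b : ℕ} (hab : a ≠ b)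
    (h0 : ∀ j, j ≠ a → j ≠ b → f j = 0) :
    ∑ j ∈ Finset.range m, f j
      = (if a < m then f a else 0) + (if b < m then f b else 0) := by
  classical
  have hpt : ∀ j, f j = (if j = a then f a else 0) + (if j = b then f b else 0) := by
    intro j
    by_cases hja : j = a
    · subst hja; simp [hab]
    · by_cases hjb : j = b
      · subst hjb; simp [Ne.symm hab, hja]
      · simp [hja, hjb, h0 j hja hjb]
  calc ∑ j ∈ Finset.range m, f j
      = ∑ j ∈ Finset.range m, ((if j = a then f a else 0) + (if j = b then f b else 0)) :=
        Finset.sum_congr rfl (fun j _ => hpt j)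
    _ = (∑ j ∈ Finset.range m, if j = a then f a else 0)
        + (∑ j ∈ Finset.range m, if j = b then f b else 0) := Finset.sum_add_distrib
    _ = _ := by rw [Finset.sum_ite_eq' (Finset.range m) a, Finset.sum_ite_eq' (Finset.range m) b]
                simp [Finset.mem_range]

/-- the linear relation coming from `C_p X = Xᵀ C_p` -/
def Hrel (n : ℕ) (x : ℕ → ℕ → ZMod 2) : Prop :=
  ∀ p i k : ℕ, p < 4 → i < n → k < n →
    g p (i-1) i * x (i-1) k + g p i (i+1) * x (i+1) k
      = g p (k-1) k * x (k-1) i + g p k (k+1) * x (k+1) i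

def Hout (n : ℕ) (x : ℕ → ℕ → ZMod 2) : Prop :=
  ∀ i k : ℕ, n ≤ i ∨ n ≤ k → x i k = 0

def Hsq (n : ℕ) (x : ℕ → ℕ → ZMod 2) : Prop :=
  ∀ i k : ℕ, i < n → k < n → x i k = ∑ j ∈ Finset.range n, x i j * x j k

section Core

variable {n : ℕ} {x : ℕ → ℕ → ZMod 2}

/-- `X_{u,u+2} = 0`. -/
lemma Z2a (hrel : Hrel n x) {u : ℕ} (h2 : u + 2 < n) : x u (u+2) = 0 := by
  have h := hrel (u % 4) (u+1) (u+2) (by omega) (by omega) h2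
  simp only [show u+1-1 = u by omega, show u+1+1 = u+2 by omega,
    show u+2-1 = u+1 by omega, show u+2+1 = u+3 by omega] at h
  rw [g_one (by omega), g_zero (p := u % 4) (a := u+1) (b := u+2) (by omega),
      g_zero (p := u % 4) (a := u+2) (b := u+3) (by omega)] at h
  simpa using h

/-- constant diagonal -/
lemma DIAG (hrel : Hrel n x) {u : ℕ} (h1 : u + 1 < n) : x (u+1) (u+1) = x u u := by
  have h := hrel (u % 4) u (u+1) (by omega) (by omega) h1
  simp only [show u+1-1 = u by omega, show u+1+1 = u+2 by omega] at h
  rcases Nat.eq_zero_or_pos u with hu | hu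
  · subst hu
    norm_num at h
    rw [g_zero (p := 0) (a := 0 - 1) (b := 0) (by omega), g_one (p := 0) (a := 0) (b := 1) (by omega),
        g_zero (p := 0) (a := 1) (b := 2) (by omega)] at h
    simpa using h
  · rw [g_one (p := u % 4) (a := u - 1) (b := u) (by omega), g_one (by omega),
        g_zero (p := u % 4) (a := u+1) (b := u+2) (by omega)] at h
    have hz : x (u-1) (u+1) = 0 := by
      have := Z2a (x := x) hrel (u := u - 1) (by omega)
      rwa [show u - 1 + 2 = u + 1 by omega] at this
    rw [hz] at h
    simpa using h

/-- entries with column ≡ row + 2 (mod 4) vanish -/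
lemma L2a (hrel : Hrel n x) {u v : ℕ} (hu : u < n) (hv : v < n)
    (hm : v % 4 = (u + 2) % 4) : x u v = 0 := by
  by_cases hu1 : u + 1 < n
  · have h := hrel (u % 4) (u+1) v (by omega) hu1 hv
    simp only [show u+1-1 = u by omega, show u+1+1 = u+2 by omega] at h
    rw [g_one (by omega), g_zero (p := u % 4) (a := u+1) (b := u+2) (by omega),
        g_zero (p := u % 4) (a := v-1) (b := v) (by omega),
        g_zero (p := u % 4) (a := v) (b := v+1) (by omega)] at h
    simpa using h
  · have hu0 : 1 ≤ u := by omega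
    have h := hrel (u % 4) (u-1) v (by omega) (by omega) hv
    simp only [show u-1+1 = u by omega, Nat.sub_sub, show (1:ℕ)+1 = 2 from rfl] at h
    rw [g_zero (p := u % 4) (a := u - 2) (b := u - 1) (by omega),
        g_one (p := u % 4) (a := u - 1) (b := u) (by omega),
        g_zero (p := u % 4) (a := v-1) (b := v) (by omega),
        g_zero (p := u % 4) (a := v) (b := v+1) (by omega)] at h
    simpa using h

/-- bottom row kill -/
lemma S2z (hrel : Hrel n x) {u : ℕ} (hu : u < n) (hu1 : 1 ≤ u) (hm : u % 4 = 0) :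
    x u 0 = 0 := by
  have hu4 : 4 ≤ u := by omega
  have h := hrel 0 (u-1) 0 (by omega) (by omega) (by omega)
  simp only [show u-1+1 = u by omega, Nat.sub_sub, show (1:ℕ)+1 = 2 from rfl,
    show (0:ℕ)-1 = 0 from rfl, show (0:ℕ)+1 = 1 from rfl] at h
  rw [g_zero (p := 0) (a := u-2) (b := u-1) (by omega),
      g_one (p := 0) (a := u-1) (b := u) (by omega),
      g_zero (p := 0) (a := 0) (b := 0) (by omega),
      g_one (p := 0) (a := 0) (b := 1) (by omega)] at h
  have hL : x 1 (u-1) = 0 := L2a hrel (by omega) (by omega) (by omega)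
  rw [hL] at h
  simpa using h

/-- the rotation identity -/
lemma S2s (hrel : Hrel n x) (hout : Hout n x) {u v : ℕ} (hu : u < n) (hv : v < n)
    (hu1 : 1 ≤ u) (hv1 : 1 ≤ v) (hm : v % 4 = u % 4) :
    x u v = x (v-1) (u-1) := by
  have h := hrel (u % 4) (u-1) v (by omega) (by omega) hv
  simp only [show u-1+1 = u by omega, Nat.sub_sub, show (1:ℕ)+1 = 2 from rfl] at h
  rw [g_zero (p := u % 4) (a := u-2) (b := u-1) (by omega),
      g_one (p := u % 4) (a := u-1) (b := u) (by omega),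
      g_one (p := u % 4) (a := v-1) (b := v) (by omega),
      g_one (p := u % 4) (a := v) (b := v+1) (by omega)] at h
  have hD : x (v+1) (u-1) = 0 := by
    by_cases hv2 : v + 1 < n
    · exact L2a hrel hv2 (by omega) (by omega)
    · exact hout _ _ (Or.inl (by omega))
  rw [hD] at h
  simpa using h

/-- wrong-direction entries vanish -/
lemma Dbad (hrel : Hrel n x) (hout : Hout n x) :
    ∀ s u v : ℕ, u + v ≤ s → u < n → v < n → v % 4 = u % 4 →
      ((u % 2 = 0 ∧ v < u) ∨ (u % 2 = 1 ∧ u < v)) → x u v = 0 := by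
  intro s
  induction s using Nat.strong_induction_on with
  | _ s IH =>
    intro u v hs hu hv hm hdir
    rcases hdir with ⟨hu2, hvu⟩ | ⟨hu2, huv⟩
    · rcases Nat.eq_zero_or_pos v with hv0 | hv0
      · subst hv0
        exact S2z hrel hu (by omega) (by omega)
      · rw [S2s hrel hout hu hv (by omega) hv0 hm]
        exact IH (s-1) (by omega) (v-1) (u-1) (by omega) (by omega) (by omega)
          (by omega) (Or.inr ⟨by omega, by omega⟩)
    · rw [S2s hrel hout hu hv (by omega) (by omega) hm]
      exact IH (s-1) (by omega) (v-1) (u-1) (by omega) (by omega) (by omega)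
        (by omega) (Or.inl ⟨by omega, by omega⟩)

/-- zero diagonal -/
lemma diag0 (hrel : Hrel n x) (hd : x 0 0 = 0) : ∀ u, u < n → x u u = 0 := by
  intro u
  induction u with
  | zero => intro _; exact hd
  | succ m IHm => intro hm; rw [DIAG hrel hm]; exact IHm (by omega)

/-- dichotomy for even-even entries -/
lemma EV (hrel : Hrel n x) (hout : Hout n x) (hd : x 0 0 = 0) {i j : ℕ}
    (hi : i < n) (hj : j < n) (hi2 : i % 2 = 0) (hj2 : j % 2 = 0)
    (hne : x i j ≠ 0) : i < j := by
  have hmod : j % 4 = i % 4 ∨ j % 4 = (i+2) % 4 := by omega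
  rcases hmod with hmod | hmod
  · rcases lt_trichotomy i j with h | h | h
    · exact h
    · exact absurd (h ▸ diag0 hrel hd i hi) hne
    · exact absurd (Dbad hrel hout (i+j) i j le_rfl hi hj hmod
        (Or.inl ⟨hi2, h⟩)) hne
  · exact absurd (L2a hrel hi hj hmod) hne

/-- dichotomy for odd-odd entries -/
lemma OD (hrel : Hrel n x) (hout : Hout n x) (hd : x 0 0 = 0) {i j : ℕ}
    (hi : i < n) (hj : j < n) (hi2 : i % 2 = 1) (hj2 : j % 2 = 1)
    (hne : x i j ≠ 0) : j < i := by
  have hmod : j % 4 = i % 4 ∨ j % 4 = (i+2) % 4 := by omega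
  rcases hmod with hmod | hmod
  · rcases lt_trichotomy j i with h | h | h
    · exact h
    · exact absurd (h ▸ diag0 hrel hd j hj) hne
    · exact absurd (Dbad hrel hout (i+j) i j le_rfl hi hj hmod
        (Or.inr ⟨hi2, h⟩)) hne
  · exact absurd (L2a hrel hi hj hmod) hne

/-- even-odd entries vanish (downward induction on the index sum) -/
lemma EOzero (hrel : Hrel n x) (hout : Hout n x) (hsq : Hsq n x) (hd : x 0 0 = 0) :
    ∀ t i k : ℕ, i < n → k < n → i % 2 = 0 → k % 2 = 1 → 2*n ≤ i + k + t →
      x i k = 0 := by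
  intro t
  induction t with
  | zero => intro i k hi hk _ _ hs; omega
  | succ t IH =>
    intro i k hi hk hi2 hk2 hs
    rw [hsq i k hi hk]
    apply Finset.sum_eq_zero
    intro j hj
    have hjn : j < n := Finset.mem_range.mp hj
    by_cases hj2 : j % 2 = 0
    · rcases eq_or_ne (x i j) 0 with h0 | h0
      · rw [h0, zero_mul]
      · have hij := EV hrel hout hd hi hjn hi2 hj2 h0
        rw [IH j k hjn hk hj2 hk2 (by omega), mul_zero]
    · rcases eq_or_ne (x j k) 0 with h0 | h0
      · rw [h0, mul_zero]
      · have hkj := OD hrel hout hd hjn hk (by omega) hk2 h0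
        rw [IH i j hi hjn hi2 (by omega) (by omega), zero_mul]

/-- odd-even entries vanish (upward induction on the index sum) -/
lemma OEzero (hrel : Hrel n x) (hout : Hout n x) (hsq : Hsq n x) (hd : x 0 0 = 0) :
    ∀ s i k : ℕ, i < n → k < n → i % 2 = 1 → k % 2 = 0 → i + k ≤ s →
      x i k = 0 := by
  intro s
  induction s with
  | zero => intro i k _ _ hi2 _ hs; omega
  | succ s IH =>
    intro i k hi hk hi2 hk2 hs
    rw [hsq i k hi hk]
    apply Finset.sum_eq_zero
    intro j hj
    have hjn : j < n := Finset.mem_range.mp hj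
    by_cases hj2 : j % 2 = 0
    · rcases eq_or_ne (x j k) 0 with h0 | h0
      · rw [h0, mul_zero]
      · have hjk := EV hrel hout hd hjn hk hj2 hk2 h0
        rw [IH i j hi hjn hi2 hj2 (by omega), zero_mul]
    · rcases eq_or_ne (x i j) 0 with h0 | h0
      · rw [h0, zero_mul]
      · have hji := OD hrel hout hd hi hjn hi2 (by omega) h0
        rw [IH j k hjn hk (by omega) hk2 (by omega), mul_zero]

/-- even-even off-diagonal entries vanish -/
lemma EEzero (hrel : Hrel n x) (hout : Hout n x) (hsq : Hsq n x) (hd : x 0 0 = 0) :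
    ∀ d i k : ℕ, i < n → k < n → i % 2 = 0 → k % 2 = 0 → i ≠ k → k - i ≤ d →
      x i k = 0 := by
  intro d
  induction d with
  | zero =>
    intro i k hi hk hi2 hk2 hne hlt
    have hki : k < i := by omega
    have hmod : k % 4 = i % 4 ∨ k % 4 = (i+2) % 4 := by omega
    rcases hmod with hmod | hmod
    · exact Dbad hrel hout (i+k) i k le_rfl hi hk hmod (Or.inl ⟨hi2, hki⟩)
    · exact L2a hrel hi hk hmod
  | succ d IH =>
    intro i k hi hk hi2 hk2 hne hlt
    by_cases hik : k ≤ i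
    · have hki : k < i := by omega
      have hmod : k % 4 = i % 4 ∨ k % 4 = (i+2) % 4 := by omega
      rcases hmod with hmod | hmod
      · exact Dbad hrel hout (i+k) i k le_rfl hi hk hmod (Or.inl ⟨hi2, hki⟩)
      · exact L2a hrel hi hk hmod
    · rw [hsq i k hi hk]
      apply Finset.sum_eq_zero
      intro j hj
      have hjn : j < n := Finset.mem_range.mp hj
      by_cases hj2 : j % 2 = 0
      · rcases eq_or_ne (x i j) 0 with h0 | h0
        · rw [h0, zero_mul]
        · rcases eq_or_ne (x j k) 0 with h1 | h1
          · rw [h1, mul_zero]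
          · have hij := EV hrel hout hd hi hjn hi2 hj2 h0
            have hjk := EV hrel hout hd hjn hk hj2 hk2 h1
            exact absurd (IH i j hi hjn hi2 hj2 (by omega) (by omega)) h0
      · rw [EOzero hrel hout hsq hd (2*n) i j hi hjn hi2 (by omega) (by omega),
          zero_mul]

/-- odd-odd off-diagonal entries vanish -/
lemma OOzero (hrel : Hrel n x) (hout : Hout n x) (hsq : Hsq n x) (hd : x 0 0 = 0) :
    ∀ d i k : ℕ, i < n → k < n → i % 2 = 1 → k % 2 = 1 → i ≠ k → i - k ≤ d →
      x i k = 0 := by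
  intro d
  induction d with
  | zero =>
    intro i k hi hk hi2 hk2 hne hlt
    have hik : i < k := by omega
    have hmod : k % 4 = i % 4 ∨ k % 4 = (i+2) % 4 := by omega
    rcases hmod with hmod | hmod
    · exact Dbad hrel hout (i+k) i k le_rfl hi hk hmod (Or.inr ⟨hi2, hik⟩)
    · exact L2a hrel hi hk hmod
  | succ d IH =>
    intro i k hi hk hi2 hk2 hne hlt
    by_cases hik : i ≤ k
    · have hik' : i < k := by omega
      have hmod : k % 4 = i % 4 ∨ k % 4 = (i+2) % 4 := by omega
      rcases hmod with hmod | hmod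
      · exact Dbad hrel hout (i+k) i k le_rfl hi hk hmod (Or.inr ⟨hi2, hik'⟩)
      · exact L2a hrel hi hk hmod
    · rw [hsq i k hi hk]
      apply Finset.sum_eq_zero
      intro j hj
      have hjn : j < n := Finset.mem_range.mp hj
      by_cases hj2 : j % 2 = 0
      · rw [OEzero hrel hout hsq hd (i+j) i j hi hjn hi2 hj2 le_rfl, zero_mul]
      · rcases eq_or_ne (x i j) 0 with h0 | h0
        · rw [h0, zero_mul]
        · rcases eq_or_ne (x j k) 0 with h1 | h1
          · rw [h1, mul_zero]
          · have hji := OD hrel hout hd hi hjn hi2 (by omega) h0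
            have hkj := OD hrel hout hd hjn hk (by omega) hk2 h1
            exact absurd (IH i j hi hjn hi2 (by omega) (by omega) (by omega)) h0

/-- the core result -/
lemma core (hrel : Hrel n x) (hout : Hout n x) (hsq : Hsq n x) (hd : x 0 0 = 0) :
    ∀ i k : ℕ, x i k = 0 := by
  intro i k
  by_cases hi : i < n
  · by_cases hk : k < n
    · by_cases hi2 : i % 2 = 0
      · by_cases hk2 : k % 2 = 0
        · rcases eq_or_ne i k with h | h
          · exact h ▸ diag0 hrel hd i hi
          · exact EEzero hrel hout hsq hd k i k hi hk hi2 hk2 h (by omega)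
        · exact EOzero hrel hout hsq hd (2*n) i k hi hk hi2 (by omega) (by omega)
      · by_cases hk2 : k % 2 = 0
        · exact OEzero hrel hout hsq hd (i+k) i k hi hk (by omega) hk2 le_rfl
        · rcases eq_or_ne i k with h | h
          · exact h ▸ diag0 hrel hd i hi
          · exact OOzero hrel hout hsq hd i i k hi hk (by omega) (by omega) h (by omega)
    · exact hout i k (Or.inr (by omega))
  · exact hout i k (Or.inl (by omega))

end Core

section Matrices

variable {n : ℕ}

/-- ℕ-indexed entries of a matrix, zero outside -/
def xe (X : Matrix (Fin n) (Fin n) (ZMod 2)) : ℕ → ℕ → ZMod 2 :=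
  fun i k => if h : i < n ∧ k < n then X ⟨i, h.1⟩ ⟨k, h.2⟩ else 0

lemma xe_app (X : Matrix (Fin n) (Fin n) (ZMod 2)) (j k : Fin n) :
    xe X j.val k.val = X j k := dif_pos ⟨j.isLt, k.isLt⟩

lemma xe_out (X : Matrix (Fin n) (Fin n) (ZMod 2)) : Hout n (xe X) := by
  intro i k h
  unfold xe
  rw [dif_neg (by omega)]

lemma spiral_g (p : Fin 4) (i k : Fin n) :
    spiralC n p i k = g p.val i.val k.val := by
  unfold spiralC pathAdj g
  by_cases h1 : ((i:ℕ)+1 = (k:ℕ) ∨ (k:ℕ)+1 = (i:ℕ)) <;>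
    by_cases h2 : (((i:ℕ) % 4 = (p:ℕ) ∧ ¬ (k:ℕ) % 4 = (p:ℕ)) ∨
      ((k:ℕ) % 4 = (p:ℕ) ∧ ¬ (i:ℕ) % 4 = (p:ℕ))) <;>
    simp [h1, h2]

lemma hrel_of (X : Matrix (Fin n) (Fin n) (ZMod 2))
    (hX : ∀ p, spiralC n p * X = Xᵀ * spiralC n p) :
    Hrel n (xe X) := by
  intro p i k hp hi hk
  have H := congrFun (congrFun (hX ⟨p, hp⟩) ⟨i, hi⟩) ⟨k, hk⟩
  rw [Matrix.mul_apply, Matrix.mul_apply] at H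
  have hL : ∑ j : Fin n, spiralC n ⟨p, hp⟩ ⟨i, hi⟩ j * X j ⟨k, hk⟩
      = ∑ jv ∈ Finset.range n, g p i jv * xe X jv k := by
    rw [← Fin.sum_univ_eq_sum_range (fun jv => g p i jv * xe X jv k) n]
    apply Finset.sum_congr rfl
    intro j _
    rw [spiral_g]
    congr 1
    exact (xe_app X j ⟨k, hk⟩).symm
  have hR : ∑ j : Fin n, Xᵀ ⟨i, hi⟩ j * spiralC n ⟨p, hp⟩ j ⟨k, hk⟩
      = ∑ jv ∈ Finset.range n, xe X jv i * g p jv k := by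
    rw [← Fin.sum_univ_eq_sum_range (fun jv => xe X jv i * g p jv k) n]
    apply Finset.sum_congr rfl
    intro j _
    rw [Matrix.transpose_apply, spiral_g]
    congr 1
    exact (xe_app X j ⟨i, hi⟩).symm
  rw [hL, hR] at H
  rw [sum_two (a := i-1) (b := i+1) (by omega)
        (fun j hj1 hj2 => by rw [g_zero (by omega), zero_mul]),
      sum_two (a := k-1) (b := k+1) (by omega)
        (fun j hj1 hj2 => by rw [g_zero (by omega), mul_zero]),
      if_pos (show i-1 < n by omega), if_pos (show k-1 < n by omega)] at H
  have eA2 : g p i (i+1) * xe X (i+1) k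
      = (if i+1 < n then g p i (i+1) * xe X (i+1) k else 0) := by
    by_cases h1 : i+1 < n
    · rw [if_pos h1]
    · rw [if_neg h1, xe_out X _ _ (Or.inl (by omega)), mul_zero]
  have eB2 : g p k (k+1) * xe X (k+1) i
      = (if k+1 < n then xe X (k+1) i * g p (k+1) k else 0) := by
    by_cases h1 : k+1 < n
    · rw [if_pos h1, mul_comm, g_symm]
    · rw [if_neg h1, xe_out X _ _ (Or.inl (by omega)), mul_zero]
  rw [g_symm p (i-1) i, eA2, mul_comm (g p (k-1) k) (xe X (k-1) i), eB2]
  exact H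

lemma hsq_of (X : Matrix (Fin n) (Fin n) (ZMod 2)) (h : X * X = X) : Hsq n (xe X) := by
  intro i k hi hk
  have H := congrFun (congrFun h.symm ⟨i, hi⟩) ⟨k, hk⟩
  rw [Matrix.mul_apply] at H
  rw [show xe X i k = X ⟨i, hi⟩ ⟨k, hk⟩ from dif_pos ⟨hi, hk⟩, H,
    ← Fin.sum_univ_eq_sum_range (fun jv => xe X i jv * xe X jv k) n]
  apply Finset.sum_congr rfl
  intro j _
  congr 1
  · exact (xe_app X ⟨i, hi⟩ j).symm
  · exact (xe_app X j ⟨k, hk⟩).symm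

/-- Any idempotent self-adjoint (w.r.t. all the `spiralC` forms) matrix is `0` or `1`. -/
lemma key (hn : 0 < n) (X : Matrix (Fin n) (Fin n) (ZMod 2))
    (hX : ∀ p, spiralC n p * X = Xᵀ * spiralC n p) (hsqX : X * X = X) :
    X = 0 ∨ X = 1 := by
  have h2 : ∀ a : ZMod 2, a = 0 ∨ a = 1 := by decide
  rcases h2 (X ⟨0, hn⟩ ⟨0, hn⟩) with h0 | h0
  · left
    ext i k
    have hc := core (hrel_of X hX) (xe_out X) (hsq_of X hsqX)
      (by rw [show xe X 0 0 = X ⟨0, hn⟩ ⟨0, hn⟩ from dif_pos ⟨hn, hn⟩]; exact h0) i.val k.val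
    rw [xe_app X i k] at hc
    simpa using hc
  · right
    have hXX : X + X = 0 := by
      ext i k
      rw [Matrix.add_apply, Matrix.zero_apply]
      exact CharTwo.add_self_eq_zero _
    have hYrel : ∀ p, spiralC n p * (1 + X) = (1 + X)ᵀ * spiralC n p := by
      intro p
      rw [mul_add, mul_one, Matrix.transpose_add, Matrix.transpose_one, add_mul,
        one_mul, hX p]
    have hYsq : (1 + X) * (1 + X) = (1 + X) := by
      rw [mul_add, mul_one, add_mul, one_mul, hsqX, ← add_assoc, add_assoc (1 + X) X X, hXX,
        add_zero]
    have hY0 : (1 + X) ⟨0, hn⟩ ⟨0, hn⟩ = 0 := by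
      rw [Matrix.add_apply, Matrix.one_apply_eq, h0]
      decide
    have hYzero : (1 + X) = 0 := by
      ext i k
      have hc := core (hrel_of (1 + X) hYrel) (xe_out (1 + X)) (hsq_of (1 + X) hYsq)
        (by rw [show xe (1 + X) 0 0 = (1 + X) ⟨0, hn⟩ ⟨0, hn⟩ from dif_pos ⟨hn, hn⟩]
            exact hY0) i.val k.val
      rw [xe_app (1 + X) i k] at hc
      simpa using hc
    have hX1 : X = -1 := eq_neg_of_add_eq_zero_right hYzero
    rw [hX1]
    ext i k
    rw [Matrix.neg_apply]
    exact CharTwo.neg_eq _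

end Matrices

/-- The tuple of commutation matrices of the 4-partite spiral graph state `|G_n⟩` is
indecomposable under simultaneous congruence, for every `n ≥ 4`. -/
theorem spiral_indecomposable (n : ℕ) (hn : 4 ≤ n) :
    ¬ Decomposable (spiralC n) := by
  rintro ⟨n₁, n₂, h1, h2, h3, Q, hQ, hcross⟩
  have h0n : (0:ℕ) < n := by omega
  have hn1 : n₁ < n := by omega
  have hdet : IsUnit Q.det := (Matrix.isUnit_iff_isUnit_det Q).mp hQ
  have hQi : Q * Q⁻¹ = 1 := Matrix.mul_nonsing_inv Q hdet
  have hiQ : Q⁻¹ * Q = 1 := Matrix.nonsing_inv_mul Q hdet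
  have hT1 : (Q⁻¹)ᵀ * Qᵀ = 1 := by rw [← Matrix.transpose_mul, hQi, Matrix.transpose_one]
  have hT2 : Qᵀ * (Q⁻¹)ᵀ = 1 := by rw [← Matrix.transpose_mul, hiQ, Matrix.transpose_one]
  have hc1 : ∀ Z : Matrix (Fin n) (Fin n) (ZMod 2), (Q⁻¹)ᵀ * (Qᵀ * Z) = Z := fun Z => by
    rw [← Matrix.mul_assoc, hT1, one_mul]
  have hc2 : ∀ Z : Matrix (Fin n) (Fin n) (ZMod 2), Q * (Q⁻¹ * Z) = Z := fun Z => by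
    rw [← Matrix.mul_assoc, hQi, one_mul]
  set d : Fin n → ZMod 2 := fun k => if k.val < n₁ then 1 else 0 with hd
  set P : Matrix (Fin n) (Fin n) (ZMod 2) := Matrix.diagonal d with hP
  have hPP : P * P = P := by
    have hdd : (fun i => d i * d i) = d := by
      funext i
      by_cases h : i.val < n₁ <;> simp [hd, h]
    rw [hP, Matrix.diagonal_mul_diagonal, hdd]
  have hPt : Pᵀ = P := by rw [hP, Matrix.diagonal_transpose]
  have hComm : ∀ p, P * (Q * spiralC n p * Qᵀ) = (Q * spiralC n p * Qᵀ) * P := by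
    intro p
    ext a b
    rw [hP, Matrix.diagonal_mul, Matrix.mul_diagonal]
    by_cases ha : a.val < n₁ <;> by_cases hb : b.val < n₁
    · simp [hd, ha, hb]
    · rw [hcross p a b (Or.inl ⟨ha, by omega⟩)]
      simp
    · rw [hcross p a b (Or.inr ⟨hb, by omega⟩)]
      simp
    · simp [hd, ha, hb]
  have hCommZ : ∀ (p : Fin 4) (Z : Matrix (Fin n) (Fin n) (ZMod 2)),
      P * (Q * (spiralC n p * (Qᵀ * Z))) = Q * (spiralC n p * (Qᵀ * (P * Z))) := by
    intro p Z
    have h := congrArg (· * Z) (hComm p)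
    simpa only [Matrix.mul_assoc] using h
  set π : Matrix (Fin n) (Fin n) (ZMod 2) := Qᵀ * P * (Q⁻¹)ᵀ with hπ
  have hπsq : π * π = π := by
    rw [hπ]
    simp only [Matrix.mul_assoc]
    rw [hc1]
    rw [show P * (P * (Q⁻¹)ᵀ) = (P * P) * (Q⁻¹)ᵀ from (Matrix.mul_assoc P P _).symm, hPP]
  have hπt : πᵀ = Q⁻¹ * P * Q := by
    rw [hπ, Matrix.transpose_mul, Matrix.transpose_mul, Matrix.transpose_transpose, hPt,
      Matrix.transpose_transpose, Matrix.mul_assoc]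
  have hCeq : ∀ p, spiralC n p = Q⁻¹ * (Q * spiralC n p * Qᵀ) * (Q⁻¹)ᵀ := by
    intro p
    calc spiralC n p = (Q⁻¹ * Q) * spiralC n p * (Qᵀ * (Q⁻¹)ᵀ) := by
          rw [hiQ, hT2, one_mul, mul_one]
      _ = Q⁻¹ * (Q * spiralC n p * Qᵀ) * (Q⁻¹)ᵀ := by simp only [Matrix.mul_assoc]
  have hπrel : ∀ p, spiralC n p * π = πᵀ * spiralC n p := by
    intro p
    rw [hπt, hπ, hCeq p]
    simp only [Matrix.mul_assoc]
    rw [hc1, hc2, hCommZ p]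
  have hπQ : π * Qᵀ = Qᵀ * P := by
    rw [hπ]
    simp only [Matrix.mul_assoc]
    rw [hT1, mul_one]
  rcases key h0n π hπrel hπsq with h | h
  · have hz : Qᵀ * P = 0 := by rw [← hπQ, h, zero_mul]
    have hP0 : P = 0 := by
      calc P = (Q⁻¹)ᵀ * (Qᵀ * P) := (hc1 P).symm
        _ = 0 := by rw [hz, mul_zero]
    have hco := congrFun (congrFun hP0 ⟨0, h0n⟩) ⟨0, h0n⟩
    rw [hP, Matrix.diagonal_apply_eq, Matrix.zero_apply] at hco
    simp only [hd] at hco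
    rw [if_pos (show (0:ℕ) < n₁ by omega)] at hco
    exact one_ne_zero hco
  · have hz : Qᵀ * P = Qᵀ := by rw [← hπQ, h, one_mul]
    have hP1 : P = 1 := by
      calc P = (Q⁻¹)ᵀ * (Qᵀ * P) := (hc1 P).symm
        _ = 1 := by rw [hz, hT1]
    have hco := congrFun (congrFun hP1 ⟨n₁, hn1⟩) ⟨n₁, hn1⟩
    rw [hP, Matrix.diagonal_apply_eq, Matrix.one_apply_eq] at hco
    simp only [hd] at hco
    rw [if_neg (show ¬ (n₁ < n₁) by omega)] at hco
    exact zero_ne_one hco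

end Stmt4
end

section
/- For every natural number M ≥ 4 and every natural number N there exist a natural number n ≥ N, pairwise disjoint (possibly empty) subsets α_1, …, α_M of Fin n whose union is Fin n, a maximally isotropic subspace V of ((ZMod 2)^{2n}, ω), and a basis f_1, …, f_n of V such that the tuple of commutation matrices (C_{α_1}, …, C_{α_M}), where (C_{α_j})_{kl} = ω_{α_j}(f_k, f_l), is indecomposable under simultaneous congruence. -/
open Matrix Finset

namespace Stmt5

/-- Phase-space vectors of `n` qubits. -/
abbrev PV (n : ℕ) := (Fin n → ZMod 2) × (Fin n → ZMod 2)

/-- The symplectic form `ω(f, g) = Σ i, (a_i b'_i + b_i a'_i)`. -/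
def symp {n : ℕ} (f g : PV n) : ZMod 2 :=
  ∑ i, (f.1 i * g.2 i + f.2 i * g.1 i)

/-- Restriction of a phase-space vector to a set of qubits. -/
def restr {n : ℕ} (α : Finset (Fin n)) (f : PV n) : PV n :=
  (fun i => if i ∈ α then f.1 i else 0, fun i => if i ∈ α then f.2 i else 0)

/-- `ω_α(f, g) = ω(f_α, g_α)`. -/
def sympOn {n : ℕ} (α : Finset (Fin n)) (f g : PV n) : ZMod 2 :=
  symp (restr α f) (restr α g)

/-- A maximally isotropic subspace of `((ZMod 2)^{2n}, ω)`. -/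
def MaxIsotropic {n : ℕ} (V : Submodule (ZMod 2) (PV n)) : Prop :=
  (∀ f ∈ V, ∀ g ∈ V, symp f g = 0) ∧ Module.finrank (ZMod 2) V = n

/-- `f_1, …, f_n` is a basis of the subspace `V`. -/
def IsBasisFam {n : ℕ} (V : Submodule (ZMod 2) (PV n)) (f : Fin n → PV n) : Prop :=
  (∀ k, f k ∈ V) ∧ LinearIndependent (ZMod 2) f ∧
    Submodule.span (ZMod 2) (Set.range f) = V

/-- Decomposability under simultaneous congruence. -/
def Decomposable {F : Type*} [CommRing F] {ι : Type*} {n : ℕ}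
    (A : ι → Matrix (Fin n) (Fin n) F) : Prop :=
  ∃ n₁ n₂ : ℕ, 1 ≤ n₁ ∧ 1 ≤ n₂ ∧ n₁ + n₂ = n ∧
    ∃ Q : Matrix (Fin n) (Fin n) F, IsUnit Q ∧
      ∀ (i : ι) (k l : Fin n),
        ((k.val < n₁ ∧ n₁ ≤ l.val) ∨ (l.val < n₁ ∧ n₁ ≤ k.val)) →
          (Q * A i * Qᵀ) k l = 0


section Defs
variable (n : ℕ)

/-- even matching matrix -/
def mat0 : Matrix (Fin n) (Fin n) (ZMod 2) :=
  fun k l => if (k.val = l.val + 1 ∧ l.val % 2 = 0) ∨ (l.val = k.val + 1 ∧ k.val % 2 = 0)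
    then 1 else 0

/-- projection P -/
def Pma : Matrix (Fin n) (Fin n) (ZMod 2) :=
  fun k l => if (l.val % 4 = 0 ∧ k = l) ∨ (l.val % 4 = 1 ∧ (k = l ∨ k.val = l.val + 2)) ∨
      (l.val % 4 = 2 ∧ k.val + 2 = l.val) then 1 else 0

/-- projection Q -/
def Qma : Matrix (Fin n) (Fin n) (ZMod 2) :=
  fun k l => if (l.val % 4 = 0 ∧ (k = l ∨ k.val + 2 = l.val)) ∨ (l.val % 4 = 1 ∧ k = l) ∨
      (l.val % 4 = 3 ∧ l.val + 2 < n ∧ k.val = l.val + 2) then 1 else 0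

end Defs

section Entries

variable {n : ℕ} (Z : Matrix (Fin n) (Fin n) (ZMod 2))

/-- total entry function -/
def ze (k l : ℕ) : ZMod 2 := if h : k < n ∧ l < n then Z ⟨k, h.1⟩ ⟨l, h.2⟩ else 0

lemma ze_eq (k l : Fin n) : Z k l = ze Z k.val l.val := by
  simp [ze, k.isLt, l.isLt]

lemma ze_out {k l : ℕ} (h : ¬ (k < n ∧ l < n)) : ze Z k l = 0 := by
  simp [ze, h]

/-- sum of single ite -/
lemma sum_one (c : Fin n) (g : Fin n → ZMod 2) :
    (∑ m, g m * (if m = c then 1 else 0)) = g c := by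
  have h : ∀ m : Fin n, g m * (if m = c then 1 else 0) = if m = c then g m else 0 := by
    intro m; by_cases h : m = c <;> simp [h]
  rw [Finset.sum_congr rfl (fun m _ => h m), Finset.sum_ite_eq' univ c g]
  simp

lemma sum_two (c d : Fin n) (hcd : c ≠ d) (g : Fin n → ZMod 2) :
    (∑ m, g m * ((if m = c then 1 else 0) + (if m = d then 1 else 0))) = g c + g d := by
  have : ∀ m : Fin n, g m * ((if m = c then 1 else 0) + (if m = d then 1 else 0))
      = (if m = c then g m else 0) + (if m = d then g m else 0) := by
    intro m
    by_cases h1 : m = c <;> by_cases h2 : m = d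
    · exact absurd (h1 ▸ h2) hcd
    · simp [h1, h2, hcd]
    · simp [h1, h2, Ne.symm hcd]
    · simp [h1, h2]
  rw [Finset.sum_congr rfl (fun m _ => this m), Finset.sum_add_distrib,
    Finset.sum_ite_eq' univ c g, Finset.sum_ite_eq' univ d g]
  simp

lemma sum_one' (c : Fin n) (g : Fin n → ZMod 2) :
    (∑ m, (if m = c then (1 : ZMod 2) else 0) * g m) = g c := by
  have h : ∀ m : Fin n, (if m = c then (1 : ZMod 2) else 0) * g m = g m * (if m = c then 1 else 0) := by
    intro m; ring
  rw [Finset.sum_congr rfl (fun m _ => h m)]; exact sum_one c g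

lemma sum_two' (c d : Fin n) (hcd : c ≠ d) (g : Fin n → ZMod 2) :
    (∑ m, ((if m = c then (1:ZMod 2) else 0) + (if m = d then 1 else 0)) * g m) = g c + g d := by
  have h : ∀ m : Fin n, ((if m = c then (1:ZMod 2) else 0) + (if m = d then 1 else 0)) * g m
      = g m * ((if m = c then 1 else 0) + (if m = d then 1 else 0)) := by intro m; ring
  rw [Finset.sum_congr rfl (fun m _ => h m)]; exact sum_two c d hcd g

/-- column evaluation helpers -/
lemma mul_col_one {B : Matrix (Fin n) (Fin n) (ZMod 2)} {l c : Fin n}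
    (hB : ∀ m, B m l = if m = c then 1 else 0) (k : Fin n) :
    (Z * B) k l = Z k c := by
  rw [Matrix.mul_apply, Finset.sum_congr rfl (fun m _ => by rw [hB m])]
  exact sum_one c _

lemma mul_col_two {B : Matrix (Fin n) (Fin n) (ZMod 2)} {l c d : Fin n} (hcd : c ≠ d)
    (hB : ∀ m, B m l = (if m = c then 1 else 0) + (if m = d then 1 else 0)) (k : Fin n) :
    (Z * B) k l = Z k c + Z k d := by
  rw [Matrix.mul_apply, Finset.sum_congr rfl (fun m _ => by rw [hB m])]
  exact sum_two c d hcd _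

lemma mul_col_zero {B : Matrix (Fin n) (Fin n) (ZMod 2)} {l : Fin n}
    (hB : ∀ m, B m l = 0) (k : Fin n) :
    (Z * B) k l = 0 := by
  rw [Matrix.mul_apply, Finset.sum_congr rfl (fun m _ => by rw [hB m, mul_zero])]
  simp

lemma row_mul_one {B : Matrix (Fin n) (Fin n) (ZMod 2)} {k c : Fin n}
    (hB : ∀ m, B k m = if m = c then 1 else 0) (l : Fin n) :
    (B * Z) k l = Z c l := by
  rw [Matrix.mul_apply, Finset.sum_congr rfl (fun m _ => by rw [hB m])]
  exact sum_one' c _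

lemma row_mul_two {B : Matrix (Fin n) (Fin n) (ZMod 2)} {k c d : Fin n} (hcd : c ≠ d)
    (hB : ∀ m, B k m = (if m = c then 1 else 0) + (if m = d then 1 else 0)) (l : Fin n) :
    (B * Z) k l = Z c l + Z d l := by
  rw [Matrix.mul_apply, Finset.sum_congr rfl (fun m _ => by rw [hB m])]
  exact sum_two' c d hcd _

lemma row_mul_zero {B : Matrix (Fin n) (Fin n) (ZMod 2)} {k : Fin n}
    (hB : ∀ m, B k m = 0) (l : Fin n) :
    (B * Z) k l = 0 := by
  rw [Matrix.mul_apply, Finset.sum_congr rfl (fun m _ => by rw [hB m, zero_mul])]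
  simp

end Entries


section ColRow
variable {n : ℕ}

lemma Pma_col0 {l : Fin n} (hl : l.val % 4 = 0) :
    ∀ m, Pma n m l = if m = l then 1 else 0 := by
  intro m; simp only [Pma, Fin.ext_iff]
  split_ifs <;> first | rfl | decide | (exfalso; omega)

lemma Pma_col1 {l : Fin n} (hl : l.val % 4 = 1) (h2 : l.val + 2 < n) :
    ∀ m, Pma n m l = (if m = l then 1 else 0) + (if m = ⟨l.val + 2, h2⟩ then 1 else 0) := by
  intro m; simp only [Pma, Fin.ext_iff]
  split_ifs <;> first | rfl | decide | (exfalso; omega)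

lemma Pma_col2 {l j : Fin n} (hl : l.val % 4 = 2) (hj : j.val + 2 = l.val) :
    ∀ m, Pma n m l = if m = j then 1 else 0 := by
  intro m; simp only [Pma, Fin.ext_iff]
  split_ifs <;> first | rfl | decide | (exfalso; omega)

lemma Pma_col3 {l : Fin n} (hl : l.val % 4 = 3) :
    ∀ m, Pma n m l = 0 := by
  intro m; simp only [Pma, Fin.ext_iff]
  split_ifs <;> first | rfl | (exfalso; omega)

lemma Pma_row0 {k : Fin n} (hk : k.val % 4 = 0) (h2 : k.val + 2 < n) :
    ∀ m, Pma n k m = (if m = k then 1 else 0) + (if m = ⟨k.val + 2, h2⟩ then 1 else 0) := by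
  intro m; simp only [Pma, Fin.ext_iff]
  split_ifs <;> first | rfl | decide | (exfalso; omega)

lemma Pma_row1 {k : Fin n} (hk : k.val % 4 = 1) :
    ∀ m, Pma n k m = if m = k then 1 else 0 := by
  intro m; simp only [Pma, Fin.ext_iff]
  split_ifs <;> first | rfl | decide | (exfalso; omega)

lemma Pma_row2 {k : Fin n} (hk : k.val % 4 = 2) :
    ∀ m, Pma n k m = 0 := by
  intro m; simp only [Pma, Fin.ext_iff]
  split_ifs <;> first | rfl | (exfalso; omega)

lemma Pma_row3 {k j : Fin n} (hk : k.val % 4 = 3) (hj : j.val + 2 = k.val) :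
    ∀ m, Pma n k m = if m = j then 1 else 0 := by
  intro m; simp only [Pma, Fin.ext_iff]
  split_ifs <;> first | rfl | decide | (exfalso; omega)

lemma Qma_col0a {l : Fin n} (hl : l.val = 0) :
    ∀ m, Qma n m l = if m = l then 1 else 0 := by
  intro m; simp only [Qma, Fin.ext_iff]
  split_ifs <;> first | rfl | decide | (exfalso; omega)

lemma Qma_col0b {l j : Fin n} (hl : l.val % 4 = 0) (h0 : 0 < l.val) (hj : j.val + 2 = l.val) :
    ∀ m, Qma n m l = (if m = l then 1 else 0) + (if m = j then 1 else 0) := by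
  intro m; simp only [Qma, Fin.ext_iff]
  split_ifs <;> first | rfl | decide | (exfalso; omega)

lemma Qma_col1 {l : Fin n} (hl : l.val % 4 = 1) :
    ∀ m, Qma n m l = if m = l then 1 else 0 := by
  intro m; simp only [Qma, Fin.ext_iff]
  split_ifs <;> first | rfl | decide | (exfalso; omega)

lemma Qma_col2 {l : Fin n} (hl : l.val % 4 = 2) :
    ∀ m, Qma n m l = 0 := by
  intro m; simp only [Qma, Fin.ext_iff]
  split_ifs <;> first | rfl | (exfalso; omega)

lemma Qma_col3a {l : Fin n} (hl : l.val % 4 = 3) (h2 : l.val + 2 < n) :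
    ∀ m, Qma n m l = if m = ⟨l.val + 2, h2⟩ then 1 else 0 := by
  intro m; simp only [Qma, Fin.ext_iff]
  split_ifs <;> first | rfl | decide | (exfalso; omega)

lemma Qma_col3b {l : Fin n} (hl : l.val % 4 = 3) (h2 : ¬ (l.val + 2 < n)) :
    ∀ m, Qma n m l = 0 := by
  intro m; simp only [Qma, Fin.ext_iff]
  split_ifs <;> first | rfl | (exfalso; omega)

lemma Qma_row0 {k : Fin n} (hk : k.val % 4 = 0) :
    ∀ m, Qma n k m = if m = k then 1 else 0 := by
  intro m; have := m.isLt; simp only [Qma, Fin.ext_iff]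
  split_ifs <;> first | rfl | decide | (exfalso; omega)

lemma Qma_row1a {k j : Fin n} (hk : k.val % 4 = 1) (h5 : 5 ≤ k.val) (hj : j.val + 2 = k.val) :
    ∀ m, Qma n k m = (if m = k then 1 else 0) + (if m = j then 1 else 0) := by
  intro m; have := m.isLt; have := k.isLt; simp only [Qma, Fin.ext_iff]
  split_ifs <;> first | rfl | decide | (exfalso; omega)

lemma Qma_row1b {k : Fin n} (hk : k.val = 1) :
    ∀ m, Qma n k m = if m = k then 1 else 0 := by
  intro m; simp only [Qma, Fin.ext_iff]
  split_ifs <;> first | rfl | decide | (exfalso; omega)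

lemma Qma_row2a {k j : Fin n} (hk : k.val % 4 = 2) (hj : j.val = k.val + 2) :
    ∀ m, Qma n k m = if m = j then 1 else 0 := by
  intro m; have := m.isLt; have := j.isLt; simp only [Qma, Fin.ext_iff]
  split_ifs <;> first | rfl | decide | (exfalso; omega)

lemma Qma_row2b {k : Fin n} (hk : k.val % 4 = 2) (h2 : ¬ (k.val + 2 < n)) :
    ∀ m, Qma n k m = 0 := by
  intro m; have := m.isLt; simp only [Qma, Fin.ext_iff]
  split_ifs <;> first | rfl | (exfalso; omega)

lemma Qma_row3 {k : Fin n} (hk : k.val % 4 = 3) :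
    ∀ m, Qma n k m = 0 := by
  intro m; simp only [Qma, Fin.ext_iff]
  split_ifs <;> first | rfl | (exfalso; omega)

lemma mat0_col_even {l : Fin n} (hl : l.val % 2 = 0) (h1 : l.val + 1 < n) :
    ∀ m, mat0 n m l = if m = ⟨l.val + 1, h1⟩ then 1 else 0 := by
  intro m; simp only [mat0, Fin.ext_iff]
  split_ifs <;> first | rfl | (exfalso; omega)

lemma mat0_col_odd {l j : Fin n} (hl : l.val % 2 = 1) (hj : j.val + 1 = l.val) :
    ∀ m, mat0 n m l = if m = j then 1 else 0 := by
  intro m; simp only [mat0, Fin.ext_iff]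
  split_ifs <;> first | rfl | (exfalso; omega)

lemma mat0_row_even {k : Fin n} (hk : k.val % 2 = 0) (h1 : k.val + 1 < n) :
    ∀ m, mat0 n k m = if m = ⟨k.val + 1, h1⟩ then 1 else 0 := by
  intro m; simp only [mat0, Fin.ext_iff]
  split_ifs <;> first | rfl | (exfalso; omega)

lemma mat0_row_odd {k j : Fin n} (hk : k.val % 2 = 1) (hj : j.val + 1 = k.val) :
    ∀ m, mat0 n k m = if m = j then 1 else 0 := by
  intro m; simp only [mat0, Fin.ext_iff]
  split_ifs <;> first | rfl | (exfalso; omega)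

end ColRow


section Eqs
variable {n : ℕ} {Z : Matrix (Fin n) (Fin n) (ZMod 2)}

lemma ze_in {k l : ℕ} (Z : Matrix (Fin n) (Fin n) (ZMod 2)) (hk : k < n) (hl : l < n) :
    ze Z k l = Z ⟨k, hk⟩ ⟨l, hl⟩ := by
  simp [ze, hk, hl]

lemma zmod2_add_cancel {a b : ZMod 2} (h : a + b = 0) : a = b := by
  revert h; revert a; revert b; decide

variable (hn : n % 4 = 0)
variable (hP : Z * Pma n = Pma n * Z)
variable (hQ : Z * Qma n = Qma n * Z)
variable (hS : Zᵀ * mat0 n = mat0 n * Z)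

include hn hP in
/-- k≡2, l≡0 (mod 4) : Z k l = 0 -/
lemma zP1 (k l : ℕ) (hk : k % 4 = 2) (hl : l % 4 = 0) : ze Z k l = 0 := by
  by_cases h : k < n ∧ l < n
  · obtain ⟨hkn, hln⟩ := h
    have h := congrFun (congrFun hP ⟨k, hkn⟩) ⟨l, hln⟩
    rw [mul_col_one Z (Pma_col0 hl), row_mul_zero Z (Pma_row2 hk)] at h
    rw [ze_in Z hkn hln]; exact h
  · exact ze_out Z h

include hn hP in
/-- k≡2, l≡1 : Z k l = Z k (l+2) -/
lemma zP2 (k l : ℕ) (hk : k % 4 = 2) (hl : l % 4 = 1) : ze Z k l = ze Z k (l + 2) := by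
  by_cases h : k < n ∧ l < n
  · obtain ⟨hkn, hln⟩ := h
    have hl2 : l + 2 < n := by omega
    have h := congrFun (congrFun hP ⟨k, hkn⟩) ⟨l, hln⟩
    rw [mul_col_two Z (by simp [Fin.ext_iff]) (Pma_col1 hl hl2),
      row_mul_zero Z (Pma_row2 hk)] at h
    rw [ze_in Z hkn hln, ze_in Z hkn hl2]; exact zmod2_add_cancel h
  · rcases not_and_or.mp h with h' | h'
    · rw [ze_out Z (by omega), ze_out Z (by omega)]
    · rw [ze_out Z (by omega), ze_out Z (by omega)]

include hn hP in
/-- k≡0, l≡1 : Z k (l+2) = Z (k+2) l -/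
lemma zP3 (k l : ℕ) (hk : k % 4 = 0) (hl : l % 4 = 1) : ze Z k (l + 2) = ze Z (k + 2) l := by
  by_cases h : k < n ∧ l < n
  · obtain ⟨hkn, hln⟩ := h
    have hl2 : l + 2 < n := by omega
    have hk2 : k + 2 < n := by omega
    have h := congrFun (congrFun hP ⟨k, hkn⟩) ⟨l, hln⟩
    rw [mul_col_two Z (by simp [Fin.ext_iff]) (Pma_col1 hl hl2),
      row_mul_two Z (by simp [Fin.ext_iff]) (Pma_row0 hk hk2)] at h
    rw [ze_in Z hkn hl2, ze_in Z hk2 hln]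
    exact add_left_cancel h
  · rcases not_and_or.mp h with h' | h'
    · rw [ze_out Z (by omega), ze_out Z (by omega)]
    · rw [ze_out Z (by omega), ze_out Z (by omega)]

include hn hP hQ in
/-- k≡0, l≡0 : Z k l = Z (k+2) (l+2) -/
lemma zP4 (k l : ℕ) (hk : k % 4 = 0) (hl : l % 4 = 0) : ze Z k l = ze Z (k + 2) (l + 2) := by
  by_cases h : k < n ∧ l < n
  · obtain ⟨hkn, hln⟩ := h
    have hl2 : l + 2 < n := by omega
    have hk2 : k + 2 < n := by omega
    have h := congrFun (congrFun hP ⟨k, hkn⟩) ⟨l + 2, hl2⟩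
    rw [mul_col_one Z (Pma_col2 (l := ⟨l + 2, hl2⟩) (j := ⟨l, hln⟩)
        (by show (l + 2) % 4 = 2; omega) rfl),
      row_mul_two Z (by simp [Fin.ext_iff]) (Pma_row0 hk hk2)] at h
    have hz : Z ⟨k, hkn⟩ ⟨l + 2, hl2⟩ = 0 := by
      have h2 := congrFun (congrFun hQ ⟨k, hkn⟩) ⟨l + 2, hl2⟩
      rw [mul_col_zero Z (Qma_col2 (l := ⟨l + 2, hl2⟩) (by show (l + 2) % 4 = 2; omega)),
        row_mul_one Z (Qma_row0 hk)] at h2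
      exact h2.symm
    rw [hz, zero_add] at h
    rw [ze_in Z hkn hln, ze_in Z hk2 hl2]; exact h
  · rcases not_and_or.mp h with h' | h'
    · rw [ze_out Z (by omega), ze_out Z (by omega)]
    · rw [ze_out Z (by omega), ze_out Z (by omega)]

include hn hP in
/-- k≡0, l≡3 : Z k l = Z (k+2) l -/
lemma zP5 (k l : ℕ) (hk : k % 4 = 0) (hl : l % 4 = 3) : ze Z k l = ze Z (k + 2) l := by
  by_cases h : k < n ∧ l < n
  · obtain ⟨hkn, hln⟩ := h
    have hk2 : k + 2 < n := by omega
    have h := congrFun (congrFun hP ⟨k, hkn⟩) ⟨l, hln⟩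
    rw [mul_col_zero Z (Pma_col3 hl),
      row_mul_two Z (by simp [Fin.ext_iff]) (Pma_row0 hk hk2)] at h
    rw [ze_in Z hkn hln, ze_in Z hk2 hln]
    exact zmod2_add_cancel h.symm
  · rcases not_and_or.mp h with h' | h'
    · rw [ze_out Z (by omega), ze_out Z (by omega)]
    · rw [ze_out Z (by omega), ze_out Z (by omega)]

include hn hP in
/-- k≡1, l≡0 : Z k l = Z k (l+2) -/
lemma zP6 (k l : ℕ) (hk : k % 4 = 1) (hl : l % 4 = 0) : ze Z k l = ze Z k (l + 2) := by
  by_cases h : k < n ∧ l < n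
  · obtain ⟨hkn, hln⟩ := h
    have hl2 : l + 2 < n := by omega
    have h := congrFun (congrFun hP ⟨k, hkn⟩) ⟨l + 2, hl2⟩
    rw [mul_col_one Z (Pma_col2 (l := ⟨l + 2, hl2⟩) (j := ⟨l, hln⟩)
        (by show (l + 2) % 4 = 2; omega) rfl),
      row_mul_one Z (Pma_row1 hk)] at h
    rw [ze_in Z hkn hln, ze_in Z hkn hl2]; exact h
  · rcases not_and_or.mp h with h' | h'
    · rw [ze_out Z (by omega), ze_out Z (by omega)]
    · rw [ze_out Z (by omega), ze_out Z (by omega)]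

include hn hP in
/-- k≡1, l≡3 : Z k l = 0 -/
lemma zP7 (k l : ℕ) (hk : k % 4 = 1) (hl : l % 4 = 3) : ze Z k l = 0 := by
  by_cases h : k < n ∧ l < n
  · obtain ⟨hkn, hln⟩ := h
    have h := congrFun (congrFun hP ⟨k, hkn⟩) ⟨l, hln⟩
    rw [mul_col_zero Z (Pma_col3 hl), row_mul_one Z (Pma_row1 hk)] at h
    rw [ze_in Z hkn hln]; exact h.symm
  · exact ze_out Z h

include hn hP in
/-- k≡1, l≡0 : Z (k+2) l = Z k l -/
lemma zP8 (k l : ℕ) (hk : k % 4 = 1) (hl : l % 4 = 0) : ze Z (k + 2) l = ze Z k l := by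
  by_cases h : k < n ∧ l < n
  · obtain ⟨hkn, hln⟩ := h
    have hk2 : k + 2 < n := by omega
    have h := congrFun (congrFun hP ⟨k + 2, hk2⟩) ⟨l, hln⟩
    rw [mul_col_one Z (Pma_col0 hl),
      row_mul_one Z (Pma_row3 (k := ⟨k + 2, hk2⟩) (j := ⟨k, hkn⟩)
        (by show (k + 2) % 4 = 3; omega) rfl)] at h
    rw [ze_in Z hk2 hln, ze_in Z hkn hln]; exact h
  · rcases not_and_or.mp h with h' | h'
    · rw [ze_out Z (by omega), ze_out Z (by omega)]
    · rw [ze_out Z (by omega), ze_out Z (by omega)]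

include hn hP in
/-- k≡1, l≡0 : Z (k+2) l = Z k (l+2) -/
lemma zP10 (k l : ℕ) (hk : k % 4 = 1) (hl : l % 4 = 0) : ze Z (k + 2) l = ze Z k (l + 2) := by
  by_cases h : k < n ∧ l < n
  · obtain ⟨hkn, hln⟩ := h
    have hk2 : k + 2 < n := by omega
    have hl2 : l + 2 < n := by omega
    have h := congrFun (congrFun hP ⟨k + 2, hk2⟩) ⟨l + 2, hl2⟩
    rw [mul_col_one Z (Pma_col2 (l := ⟨l + 2, hl2⟩) (j := ⟨l, hln⟩)
        (by show (l + 2) % 4 = 2; omega) rfl),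
      row_mul_one Z (Pma_row3 (k := ⟨k + 2, hk2⟩) (j := ⟨k, hkn⟩)
        (by show (k + 2) % 4 = 3; omega) rfl)] at h
    rw [ze_in Z hk2 hln, ze_in Z hkn hl2]; exact h
  · rcases not_and_or.mp h with h' | h'
    · rw [ze_out Z (by omega), ze_out Z (by omega)]
    · rw [ze_out Z (by omega), ze_out Z (by omega)]

include hn hQ in
/-- k≡3, l≡1 : Z k l = 0 -/
lemma zQa (k l : ℕ) (hk : k % 4 = 3) (hl : l % 4 = 1) : ze Z k l = 0 := by
  by_cases h : k < n ∧ l < n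
  · obtain ⟨hkn, hln⟩ := h
    have h := congrFun (congrFun hQ ⟨k, hkn⟩) ⟨l, hln⟩
    rw [mul_col_one Z (Qma_col1 hl), row_mul_zero Z (Qma_row3 hk)] at h
    rw [ze_in Z hkn hln]; exact h
  · exact ze_out Z h

include hn hQ in
/-- k≡2, l≡1, k+2<n : Z k l = Z (k+2) l -/
lemma zQb1 (k l : ℕ) (hk : k % 4 = 2) (hk2 : k + 2 < n) (hl : l % 4 = 1) :
    ze Z k l = ze Z (k + 2) l := by
  by_cases h : l < n
  · have hkn : k < n := by omega
    have h := congrFun (congrFun hQ ⟨k, hkn⟩) ⟨l, h⟩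
    rw [mul_col_one Z (Qma_col1 hl),
      row_mul_one Z (Qma_row2a (j := ⟨k + 2, hk2⟩) hk rfl)] at h
    rw [ze_in Z hkn ‹l < n›, ze_in Z hk2 ‹l < n›]; exact h
  · rw [ze_out Z (by omega), ze_out Z (by omega)]

include hn hQ in
/-- k≡2, l≡3, k+2<n : Z k (l+2) = Z (k+2) l -/
lemma zQc (k l : ℕ) (hk : k % 4 = 2) (hk2 : k + 2 < n) (hl : l % 4 = 3) :
    ze Z k (l + 2) = ze Z (k + 2) l := by
  by_cases h : l < n
  · have hkn : k < n := by omega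
    have h' := congrFun (congrFun hQ ⟨k, hkn⟩) ⟨l, h⟩
    by_cases h2 : l + 2 < n
    · rw [mul_col_one Z (Qma_col3a hl h2),
        row_mul_one Z (Qma_row2a (j := ⟨k + 2, hk2⟩) hk rfl)] at h'
      rw [ze_in Z hkn h2, ze_in Z hk2 h]; exact h'
    · rw [mul_col_zero Z (Qma_col3b hl h2),
        row_mul_one Z (Qma_row2a (j := ⟨k + 2, hk2⟩) hk rfl)] at h'
      rw [ze_out Z (by omega), ze_in Z hk2 h]; exact h'
  · rw [ze_out Z (by omega), ze_out Z (by omega)]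

include hn hP hQ in
/-- k≡2, l≡2, k+2<n, l+2<n : Z k l = Z (k+2) (l+2) -/
lemma zQ3 (k l : ℕ) (hk : k % 4 = 2) (hk2 : k + 2 < n) (hl : l % 4 = 2) (hl2 : l + 2 < n) :
    ze Z k l = ze Z (k + 2) (l + 2) := by
  have hkn : k < n := by omega
  have hln : l < n := by omega
  have h := congrFun (congrFun hQ ⟨k, hkn⟩) ⟨l + 2, hl2⟩
  rw [mul_col_two Z (by simp [Fin.ext_iff]) (Qma_col0b (l := ⟨l + 2, hl2⟩) (j := ⟨l, hln⟩)
      (by show (l + 2) % 4 = 0; omega) (by show 0 < l + 2; omega) rfl),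
    row_mul_one Z (Qma_row2a (j := ⟨k + 2, hk2⟩) hk rfl)] at h
  have hz : Z ⟨k, hkn⟩ ⟨l + 2, hl2⟩ = 0 := by
    rw [← ze_in Z hkn hl2]
    exact zP1 hn hP k (l + 2) hk (by omega)
  rw [hz, zero_add] at h
  rw [ze_in Z hkn hln, ze_in Z hk2 hl2]; exact h

include hn hP hQ in
/-- k≡2, k+2<n : Z (k+2) 0 = 0 -/
lemma zQb0 (k : ℕ) (hk : k % 4 = 2) (hk2 : k + 2 < n) : ze Z (k + 2) 0 = 0 := by
  have hkn : k < n := by omega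
  have h0 : 0 < n := by omega
  have h := congrFun (congrFun hQ ⟨k, hkn⟩) ⟨0, h0⟩
  rw [mul_col_one Z (Qma_col0a rfl),
    row_mul_one Z (Qma_row2a (j := ⟨k + 2, hk2⟩) hk rfl)] at h
  have hz : Z ⟨k, hkn⟩ ⟨0, h0⟩ = 0 := by
    rw [← ze_in Z hkn h0]
    exact zP1 hn hP k 0 hk (by omega)
  rw [hz] at h
  rw [ze_in Z hk2 h0]; exact h.symm

include hn hQ in
/-- k≡3, l≡2, k+2<n, l+2<n : Z (k+2) l = Z k (l+2) -/
lemma zQe0 (k l : ℕ) (hk : k % 4 = 3) (hk2 : k + 2 < n) (hl : l % 4 = 2) (hl2 : l + 2 < n) :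
    ze Z (k + 2) l = ze Z k (l + 2) := by
  have hkn : k < n := by omega
  have hln : l < n := by omega
  have h := congrFun (congrFun hQ ⟨k + 2, hk2⟩) ⟨l + 2, hl2⟩
  rw [mul_col_two Z (by simp [Fin.ext_iff]) (Qma_col0b (l := ⟨l + 2, hl2⟩) (j := ⟨l, hln⟩)
      (by show (l + 2) % 4 = 0; omega) (by show 0 < l + 2; omega) rfl),
    row_mul_two Z (by simp [Fin.ext_iff]) (Qma_row1a (k := ⟨k + 2, hk2⟩) (j := ⟨k, hkn⟩)
      (by show (k + 2) % 4 = 1; omega) (by show 5 ≤ k + 2; omega) rfl)] at h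
  have h' := add_left_cancel h
  rw [ze_in Z hk2 hln, ze_in Z hkn hl2]; exact h'

include hn hQ in
/-- k≡3, l≡2, k+2<n : Z (k+2) l = Z k l -/
lemma zQe2a (k l : ℕ) (hk : k % 4 = 3) (hk2 : k + 2 < n) (hl : l % 4 = 2) :
    ze Z (k + 2) l = ze Z k l := by
  by_cases h : l < n
  · have hkn : k < n := by omega
    have h' := congrFun (congrFun hQ ⟨k + 2, hk2⟩) ⟨l, h⟩
    rw [mul_col_zero Z (Qma_col2 hl),
      row_mul_two Z (by simp [Fin.ext_iff]) (Qma_row1a (k := ⟨k + 2, hk2⟩) (j := ⟨k, hkn⟩)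
        (by show (k + 2) % 4 = 1; omega) (by show 5 ≤ k + 2; omega) rfl)] at h'
    rw [ze_in Z hk2 h, ze_in Z hkn h]
    exact zmod2_add_cancel h'.symm
  · rw [ze_out Z (by omega), ze_out Z (by omega)]

include hn hQ in
/-- l≡2 : Z 1 l = 0 -/
lemma zQe2b (l : ℕ) (hl : l % 4 = 2) : ze Z 1 l = 0 := by
  by_cases h : l < n
  · have h1 : 1 < n := by omega
    have h' := congrFun (congrFun hQ ⟨1, h1⟩) ⟨l, h⟩
    rw [mul_col_zero Z (Qma_col2 hl), row_mul_one Z (Qma_row1b rfl)] at h'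
    rw [ze_in Z h1 h]; exact h'.symm
  · exact ze_out Z (by omega)

include hn hQ in
/-- k≡0, l≡2 : Z k l = 0 -/
lemma zQf2 (k l : ℕ) (hk : k % 4 = 0) (hl : l % 4 = 2) : ze Z k l = 0 := by
  by_cases h : k < n ∧ l < n
  · obtain ⟨hkn, hln⟩ := h
    have h := congrFun (congrFun hQ ⟨k, hkn⟩) ⟨l, hln⟩
    rw [mul_col_zero Z (Qma_col2 hl), row_mul_one Z (Qma_row0 hk)] at h
    rw [ze_in Z hkn hln]; exact h.symm
  · exact ze_out Z h

include hn hQ in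
/-- k≡0, l≡3 : Z k l = Z k (l+2) -/
lemma zQf3 (k l : ℕ) (hk : k % 4 = 0) (hl : l % 4 = 3) : ze Z k l = ze Z k (l + 2) := by
  by_cases h : k < n ∧ l < n
  · obtain ⟨hkn, hln⟩ := h
    have h' := congrFun (congrFun hQ ⟨k, hkn⟩) ⟨l, hln⟩
    by_cases h2 : l + 2 < n
    · rw [mul_col_one Z (Qma_col3a hl h2), row_mul_one Z (Qma_row0 hk)] at h'
      rw [ze_in Z hkn hln, ze_in Z hkn h2]; exact h'.symm
    · rw [mul_col_zero Z (Qma_col3b hl h2), row_mul_one Z (Qma_row0 hk)] at h'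
      rw [ze_in Z hkn hln, ze_out Z (by omega)]; exact h'.symm
  · rcases not_and_or.mp h with h' | h'
    · rw [ze_out Z (by omega), ze_out Z (by omega)]
    · rw [ze_out Z (by omega), ze_out Z (by omega)]

/-- transpose-side evaluation for the selfadjointness relation -/
lemma tmul_col_one {c l : Fin n} (hB : ∀ m, mat0 n m l = if m = c then 1 else 0) (k : Fin n) :
    (Zᵀ * mat0 n) k l = Z c k := by
  rw [Matrix.mul_apply, Finset.sum_congr rfl (fun m _ => by
    rw [hB m, Matrix.transpose_apply])]
  exact sum_one c (fun m => Z m k)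

include hn hS in
/-- selfadjointness, odd-odd instance : Z (2b) (2a+1) = Z (2a) (2b+1) -/
lemma sX (a b : ℕ) : ze Z (2 * b) (2 * a + 1) = ze Z (2 * a) (2 * b + 1) := by
  by_cases h : 2 * a + 1 < n ∧ 2 * b + 1 < n
  · obtain ⟨ha, hb⟩ := h
    have ha' : 2 * a < n := by omega
    have hb' : 2 * b < n := by omega
    have h := congrFun (congrFun hS ⟨2 * a + 1, ha⟩) ⟨2 * b + 1, hb⟩
    rw [tmul_col_one (mat0_col_odd (l := ⟨2 * b + 1, hb⟩) (j := ⟨2 * b, hb'⟩)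
        (by show (2 * b + 1) % 2 = 1; omega) rfl),
      row_mul_one Z (mat0_row_odd (k := ⟨2 * a + 1, ha⟩) (j := ⟨2 * a, ha'⟩)
        (by show (2 * a + 1) % 2 = 1; omega) rfl)] at h
    rw [ze_in Z hb' ha, ze_in Z ha' hb]; exact h
  · rcases not_and_or.mp h with h' | h'
    · rw [ze_out Z (by omega), ze_out Z (by omega)]
    · rw [ze_out Z (by omega), ze_out Z (by omega)]

include hn hS in
/-- selfadjointness, even-even instance : Z (2b+1) (2a) = Z (2a+1) (2b) -/
lemma sY (a b : ℕ) : ze Z (2 * b + 1) (2 * a) = ze Z (2 * a + 1) (2 * b) := by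
  by_cases h : 2 * a < n ∧ 2 * b < n
  · obtain ⟨ha, hb⟩ := h
    have ha' : 2 * a + 1 < n := by omega
    have hb' : 2 * b + 1 < n := by omega
    have h := congrFun (congrFun hS ⟨2 * a, ha⟩) ⟨2 * b, hb⟩
    rw [tmul_col_one (mat0_col_even (l := ⟨2 * b, hb⟩) (by show (2 * b) % 2 = 0; omega) hb'),
      row_mul_one Z (mat0_row_even (k := ⟨2 * a, ha⟩) (by show (2 * a) % 2 = 0; omega) ha')] at h
    rw [ze_in Z hb' ha, ze_in Z ha' hb]; exact h
  · rcases not_and_or.mp h with h' | h'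
    · rw [ze_out Z (by omega), ze_out Z (by omega)]
    · rw [ze_out Z (by omega), ze_out Z (by omega)]

include hn hS in
/-- selfadjointness, mixed instance : Z (2b+1) (2a+1) = Z (2a) (2b) -/
lemma sEO (a b : ℕ) : ze Z (2 * b + 1) (2 * a + 1) = ze Z (2 * a) (2 * b) := by
  by_cases h : 2 * a + 1 < n ∧ 2 * b < n
  · obtain ⟨ha, hb⟩ := h
    have ha' : 2 * a < n := by omega
    have hb' : 2 * b + 1 < n := by omega
    have h := congrFun (congrFun hS ⟨2 * a + 1, ha⟩) ⟨2 * b, hb⟩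
    rw [tmul_col_one (mat0_col_even (l := ⟨2 * b, hb⟩) (by show (2 * b) % 2 = 0; omega) hb'),
      row_mul_one Z (mat0_row_odd (k := ⟨2 * a + 1, ha⟩) (j := ⟨2 * a, ha'⟩)
        (by show (2 * a + 1) % 2 = 1; omega) rfl)] at h
    rw [ze_in Z hb' ha, ze_in Z ha' hb]; exact h
  · rcases not_and_or.mp h with h' | h'
    · rw [ze_out Z (by omega), ze_out Z (by omega)]
    · rw [ze_out Z (by omega), ze_out Z (by omega)]

include hn hS in
/-- selfadjointness, diagonal instance : Z (2a) (2a) = Z (2a+1) (2a+1) -/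
lemma sD (a : ℕ) : ze Z (2 * a) (2 * a) = ze Z (2 * a + 1) (2 * a + 1) := by
  have h := sEO hn hS a a
  exact h.symm

end Eqs

section Blocks
variable {n : ℕ} {Z : Matrix (Fin n) (Fin n) (ZMod 2)}
variable (hn : n % 4 = 0)
variable (hP : Z * Pma n = Pma n * Z)
variable (hQ : Z * Qma n = Qma n * Z)
variable (hS : Zᵀ * mat0 n = mat0 n * Z)

include hn hP in
lemma xR1 (a b : ℕ) (ha : a % 2 = 1) (hb : b % 2 = 0) :
    ze Z (2 * a) (2 * b + 1) = ze Z (2 * a) (2 * (b + 1) + 1) := by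
  have h := zP2 hn hP (2 * a) (2 * b + 1) (by omega) (by omega)
  have e : 2 * b + 1 + 2 = 2 * (b + 1) + 1 := by ring
  rwa [e] at h

include hn hP in
lemma xR2 (a b : ℕ) (ha : a % 2 = 0) (hb : b % 2 = 0) :
    ze Z (2 * a) (2 * (b + 1) + 1) = ze Z (2 * (a + 1)) (2 * b + 1) := by
  have h := zP3 hn hP (2 * a) (2 * b + 1) (by omega) (by omega)
  have e1 : 2 * b + 1 + 2 = 2 * (b + 1) + 1 := by ring
  have e2 : 2 * a + 2 = 2 * (a + 1) := by ring
  rwa [e1, e2] at h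

include hn hP in
lemma xR3 (a b : ℕ) (ha : a % 2 = 0) (hb : b % 2 = 1) :
    ze Z (2 * a) (2 * b + 1) = ze Z (2 * (a + 1)) (2 * b + 1) := by
  have h := zP5 hn hP (2 * a) (2 * b + 1) (by omega) (by omega)
  have e2 : 2 * a + 2 = 2 * (a + 1) := by ring
  rwa [e2] at h

include hn hQ in
lemma xR4 (a b : ℕ) (ha : a % 2 = 1) (hb : b % 2 = 0) (han : 2 * a + 2 < n) :
    ze Z (2 * a) (2 * b + 1) = ze Z (2 * (a + 1)) (2 * b + 1) := by
  have h := zQb1 hn hQ (2 * a) (2 * b + 1) (by omega) (by omega) (by omega)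
  have e2 : 2 * a + 2 = 2 * (a + 1) := by ring
  rwa [e2] at h

include hn hQ in
lemma xR5 (a b : ℕ) (ha : a % 2 = 1) (hb : b % 2 = 1) (han : 2 * a + 2 < n) :
    ze Z (2 * a) (2 * (b + 1) + 1) = ze Z (2 * (a + 1)) (2 * b + 1) := by
  have h := zQc hn hQ (2 * a) (2 * b + 1) (by omega) (by omega) (by omega)
  have e1 : 2 * b + 1 + 2 = 2 * (b + 1) + 1 := by ring
  have e2 : 2 * a + 2 = 2 * (a + 1) := by ring
  rwa [e1, e2] at h

include hn hQ in
lemma xR6 (a b : ℕ) (ha : a % 2 = 0) (hb : b % 2 = 1) :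
    ze Z (2 * a) (2 * b + 1) = ze Z (2 * a) (2 * (b + 1) + 1) := by
  have h := zQf3 hn hQ (2 * a) (2 * b + 1) (by omega) (by omega)
  have e : 2 * b + 1 + 2 = 2 * (b + 1) + 1 := by ring
  rwa [e] at h

include hn hP in
lemma yY1 (a b : ℕ) (ha : a % 2 = 0) (hb : b % 2 = 0) :
    ze Z (2 * a + 1) (2 * b) = ze Z (2 * a + 1) (2 * (b + 1)) := by
  have h := zP6 hn hP (2 * a + 1) (2 * b) (by omega) (by omega)
  have e : 2 * b + 2 = 2 * (b + 1) := by ring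
  rwa [e] at h

include hn hP in
lemma yY2 (a b : ℕ) (ha : a % 2 = 0) (hb : b % 2 = 0) :
    ze Z (2 * (a + 1) + 1) (2 * b) = ze Z (2 * a + 1) (2 * b) := by
  have h := zP8 hn hP (2 * a + 1) (2 * b) (by omega) (by omega)
  have e : 2 * a + 1 + 2 = 2 * (a + 1) + 1 := by ring
  rwa [e] at h

include hn hP in
lemma yY3 (a b : ℕ) (ha : a % 2 = 0) (hb : b % 2 = 0) :
    ze Z (2 * (a + 1) + 1) (2 * b) = ze Z (2 * a + 1) (2 * (b + 1)) := by
  have h := zP10 hn hP (2 * a + 1) (2 * b) (by omega) (by omega)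
  have e1 : 2 * a + 1 + 2 = 2 * (a + 1) + 1 := by ring
  have e2 : 2 * b + 2 = 2 * (b + 1) := by ring
  rwa [e1, e2] at h

include hn hQ in
lemma yY4 (a b : ℕ) (ha : a % 2 = 1) (hb : b % 2 = 1) (han : 2 * a + 3 < n) (hbn : 2 * b + 2 < n) :
    ze Z (2 * (a + 1) + 1) (2 * b) = ze Z (2 * a + 1) (2 * (b + 1)) := by
  have h := zQe0 hn hQ (2 * a + 1) (2 * b) (by omega) (by omega) (by omega) (by omega)
  have e1 : 2 * a + 1 + 2 = 2 * (a + 1) + 1 := by ring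
  have e2 : 2 * b + 2 = 2 * (b + 1) := by ring
  rwa [e1, e2] at h

include hn hQ in
lemma yY5a (a b : ℕ) (ha : a % 2 = 1) (hb : b % 2 = 1) (han : 2 * a + 3 < n) :
    ze Z (2 * (a + 1) + 1) (2 * b) = ze Z (2 * a + 1) (2 * b) := by
  have h := zQe2a hn hQ (2 * a + 1) (2 * b) (by omega) (by omega) (by omega)
  have e1 : 2 * a + 1 + 2 = 2 * (a + 1) + 1 := by ring
  rwa [e1] at h

include hn hQ in
lemma yY5b (b : ℕ) (hb : b % 2 = 1) : ze Z 1 (2 * b) = 0 := by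
  exact zQe2b hn hQ (2 * b) (by omega)

include hn hP hQ in
lemma eMis (a b : ℕ) (hab : (a + b) % 2 = 1) : ze Z (2 * a) (2 * b) = 0 := by
  rcases Nat.mod_two_eq_zero_or_one a with ha | ha
  · exact zQf2 hn hQ (2 * a) (2 * b) (by omega) (by omega)
  · exact zP1 hn hP (2 * a) (2 * b) (by omega) (by omega)

include hn hP hQ in
lemma eStep (a b : ℕ) (han : 2 * a + 2 < n) (hbn : 2 * b + 2 < n) :
    ze Z (2 * a) (2 * b) = ze Z (2 * (a + 1)) (2 * (b + 1)) := by
  have e1 : 2 * a + 2 = 2 * (a + 1) := by ring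
  have e2 : 2 * b + 2 = 2 * (b + 1) := by ring
  rcases Nat.mod_two_eq_zero_or_one (a + b) with hab | hab
  · rcases Nat.mod_two_eq_zero_or_one a with ha | ha
    · have h := zP4 hn hP hQ (2 * a) (2 * b) (by omega) (by omega)
      rwa [e1, e2] at h
    · have h := zQ3 hn hP hQ (2 * a) (2 * b) (by omega) (by omega) (by omega) (by omega)
      rwa [e1, e2] at h
  · rw [eMis hn hP hQ a b (by omega), eMis hn hP hQ (a + 1) (b + 1) (by omega)]

include hn hP hQ in
lemma eCol0 (a : ℕ) (ha : a % 2 = 0) (h0 : 0 < a) : ze Z (2 * a) 0 = 0 := by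
  by_cases h : 2 * a < n
  · have h' := zQb0 hn hP hQ (2 * a - 2) (by omega) (by omega)
    have e : 2 * a - 2 + 2 = 2 * a := by omega
    rwa [e] at h'
  · exact ze_out Z (by omega)

include hn hP hQ in
/-- bad lower part of the even-even block vanishes -/
lemma eLow : ∀ b a : ℕ, b < a → ze Z (2 * a) (2 * b) = 0 := by
  intro b
  induction b with
  | zero =>
    intro a ha
    rcases Nat.mod_two_eq_zero_or_one a with h | h
    · exact eCol0 hn hP hQ a (by omega) ha
    · exact eMis hn hP hQ a 0 (by omega)
  | succ b ih =>
    intro a ha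
    by_cases h : 2 * a < n ∧ 2 * b + 2 < n
    · obtain ⟨h1, h2⟩ := h
      have ha1 : 1 ≤ a := by omega
      have h' := eStep hn hP hQ (a - 1) b (by omega) h2
      have e : a - 1 + 1 = a := by omega
      rw [e] at h'
      rw [← h']
      exact ih (a - 1) (by omega)
    · rcases not_and_or.mp h with h' | h'
      · exact ze_out Z (by omega)
      · exact ze_out Z (by omega)

include hn hP hQ in
/-- the even diagonal is constant -/
lemma eDiag : ∀ a : ℕ, 2 * a < n → ze Z (2 * a) (2 * a) = ze Z 0 0 := by
  intro a
  induction a with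
  | zero => intro _; norm_num
  | succ a ih =>
    intro h
    have h2 : 2 * a + 2 < n := by omega
    have h' := eStep hn hP hQ a a h2 h2
    rw [← h']
    exact ih (by omega)

include hn hS in
lemma oE (a b : ℕ) : ze Z (2 * a + 1) (2 * b + 1) = ze Z (2 * b) (2 * a) := by
  exact sEO hn hS b a

include hn hQ hP in
/-- anchor: x a b = 0 for a even, b odd at the right edge -/
lemma xAnchor (a b : ℕ) (ha : a % 2 = 0) (hb : b % 2 = 1) (hbn : n ≤ 2 * b + 2) :
    ze Z (2 * a) (2 * b + 1) = 0 := by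
  rw [xR6 hn hQ a b ha hb]
  exact ze_out Z (by omega)

include hn hP hQ in
/-- antidiagonal propagation for the X block, odd total sum -/
lemma xA : ∀ a b : ℕ, (a + b) % 2 = 1 → n ≤ 2 * a + 2 * b + 2 → ze Z (2 * a) (2 * b + 1) = 0 := by
  intro a
  induction a with
  | zero =>
    intro b hab hbn
    exact xAnchor hn hP hQ 0 b rfl (by omega) (by omega)
  | succ a ih =>
    intro b hab hbn
    rcases Nat.mod_two_eq_zero_or_one a with ha | ha
    · -- a even, b even
      have hb : b % 2 = 0 := by omega
      have h := xR2 hn hP a b (by omega) hb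
      rw [← h]
      exact ih (b + 1) (by omega) (by omega)
    · -- a odd, b odd
      have hb : b % 2 = 1 := by omega
      by_cases h2 : 2 * a + 2 < n
      · have h := xR5 hn hQ a b (by omega) hb h2
        rw [← h]
        exact ih (b + 1) (by omega) (by omega)
      · exact ze_out Z (by omega)

include hn hP hQ in
/-- all bad X entries vanish -/
lemma xF : ∀ a b : ℕ, n ≤ 2 * a + 2 * b + 2 → ze Z (2 * a) (2 * b + 1) = 0 := by
  intro a b hbad
  rcases Nat.mod_two_eq_zero_or_one (a + b) with hab | hab
  · -- even sum : same parity
    have hn2 : n ≤ 2 * a + 2 * b := by omega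
    rcases Nat.mod_two_eq_zero_or_one a with ha | ha
    · -- both even
      rcases Nat.eq_zero_or_pos a with ha0 | ha0
      · subst ha0
        exact ze_out Z (by omega)
      · by_cases h2 : 2 * a < n
        · have h := xR4 hn hQ (a - 1) b (by omega) (by omega) (by omega)
          have e : a - 1 + 1 = a := by omega
          rw [e] at h
          rw [← h]
          exact xA hn hP hQ (a - 1) b (by omega) (by omega)
        · exact ze_out Z (by omega)
    · -- both odd
      have hb1 : 1 ≤ b := by omega
      have h := xR1 hn hP a (b - 1) (by omega) (by omega)
      have e : b - 1 + 1 = b := by omega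
      rw [e] at h
      rw [← h]
      exact xA hn hP hQ a (b - 1) (by omega) (by omega)
  · exact xA hn hP hQ a b (by omega) hbad

include hn hP hQ in
/-- antidiagonal propagation for the Y block, odd total sum -/
lemma yA : ∀ a b : ℕ, (a + b) % 2 = 1 → 2 * a + 2 * b + 2 ≤ n → ze Z (2 * a + 1) (2 * b) = 0 := by
  intro a
  induction a with
  | zero =>
    intro b hab hbn
    exact yY5b hn hQ b (by omega)
  | succ a ih =>
    intro b hab hbn
    rcases Nat.mod_two_eq_zero_or_one a with ha | ha
    · -- a even, b even
      have h := yY3 hn hP a b (by omega) (by omega)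
      rw [h]
      exact ih (b + 1) (by omega) (by omega)
    · -- a odd, b odd
      have h := yY4 hn hQ a b (by omega) (by omega) (by omega) (by omega)
      rw [h]
      exact ih (b + 1) (by omega) (by omega)

include hn hP hQ in
/-- all bad Y entries vanish -/
lemma yF : ∀ a b : ℕ, 2 * a + 2 * b + 2 ≤ n → ze Z (2 * a + 1) (2 * b) = 0 := by
  intro a b hbad
  rcases Nat.mod_two_eq_zero_or_one (a + b) with hab | hab
  · have hn2 : 2 * a + 2 * b + 4 ≤ n := by omega
    rcases Nat.mod_two_eq_zero_or_one a with ha | ha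
    · -- both even
      have h := yY1 hn hP a b (by omega) (by omega)
      rw [h]
      exact yA hn hP hQ a (b + 1) (by omega) (by omega)
    · -- both odd
      have h := yY5a hn hQ a b (by omega) (by omega) (by omega)
      rw [← h]
      exact yA hn hP hQ (a + 1) b (by omega) (by omega)
  · exact yA hn hP hQ a b (by omega) hbad

end Blocks

section Cert
variable {n : ℕ} {Z : Matrix (Fin n) (Fin n) (ZMod 2)}

/-- the weight function -/
def wgt (n k : ℕ) : ℕ := if k % 2 = 0 then k / 2 else (n - 1 - k) / 2

lemma wgt_even (n a : ℕ) : wgt n (2 * a) = a := by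
  simp [wgt, Nat.mul_mod_right]

lemma wgt_odd (n a : ℕ) : wgt n (2 * a + 1) = (n - 1 - (2 * a + 1)) / 2 := by
  have h : (2 * a + 1) % 2 = 1 := by omega
  simp [wgt, h]

variable (hn : n % 4 = 0)
variable (hP : Z * Pma n = Pma n * Z)
variable (hQ : Z * Qma n = Qma n * Z)
variable (hS : Zᵀ * mat0 n = mat0 n * Z)

include hn hP hQ hS in
lemma allZero (h00 : ze Z 0 0 = 0) :
    ∀ k l : Fin n, wgt n l.val ≤ wgt n k.val → Z k l = 0 := by
  intro k l hw
  rw [ze_eq Z k l]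
  have hkn := k.isLt
  have hln := l.isLt
  rcases Nat.mod_two_eq_zero_or_one k.val with hk | hk <;>
    rcases Nat.mod_two_eq_zero_or_one l.val with hl | hl
  · -- both even : E block
    obtain ⟨a, ha⟩ : ∃ a, k.val = 2 * a := ⟨k.val / 2, by omega⟩
    obtain ⟨b, hb⟩ : ∃ b, l.val = 2 * b := ⟨l.val / 2, by omega⟩
    rw [ha, hb, wgt_even, wgt_even] at hw
    rw [ha, hb]
    rcases Nat.lt_or_ge b a with h | h
    · exact eLow hn hP hQ b a h
    · have hab : a = b := by omega
      subst hab
      rw [eDiag hn hP hQ a (by omega)]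
      exact h00
  · -- k even, l odd : X block
    obtain ⟨a, ha⟩ : ∃ a, k.val = 2 * a := ⟨k.val / 2, by omega⟩
    obtain ⟨b, hb⟩ : ∃ b, l.val = 2 * b + 1 := ⟨l.val / 2, by omega⟩
    rw [ha, hb, wgt_even, wgt_odd] at hw
    rw [ha, hb]
    rw [hb] at hln
    exact xF hn hP hQ a b (by omega)
  · -- k odd, l even : Y block
    obtain ⟨a, ha⟩ : ∃ a, k.val = 2 * a + 1 := ⟨k.val / 2, by omega⟩
    obtain ⟨b, hb⟩ : ∃ b, l.val = 2 * b := ⟨l.val / 2, by omega⟩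
    rw [ha, hb, wgt_odd, wgt_even] at hw
    rw [ha, hb]
    rw [ha] at hkn
    exact yF hn hP hQ a b (by omega)
  · -- both odd : O block
    obtain ⟨a, ha⟩ : ∃ a, k.val = 2 * a + 1 := ⟨k.val / 2, by omega⟩
    obtain ⟨b, hb⟩ : ∃ b, l.val = 2 * b + 1 := ⟨l.val / 2, by omega⟩
    rw [ha, hb, wgt_odd, wgt_odd] at hw
    rw [ha] at hkn; rw [hb] at hln
    rw [ha, hb, oE hn hS]
    rcases Nat.lt_or_ge a b with h | h
    · exact eLow hn hP hQ a b h
    · have hab : a = b := by omega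
      subst hab
      rw [eDiag hn hP hQ a (by omega)]
      exact h00

/-- strictly triangular (w.r.t. a weight) matrices are nilpotent -/
lemma pow_wt_zero (W : Matrix (Fin n) (Fin n) (ZMod 2)) (w : Fin n → ℕ) (T : ℕ)
    (hwT : ∀ k, w k < T) (hz : ∀ k l, w l ≤ w k → W k l = 0) : W ^ T = 0 := by
  have key : ∀ t : ℕ, ∀ k l : Fin n, w l < w k + t → (W ^ t) k l = 0 := by
    intro t
    induction t with
    | zero =>
      intro k l hlt
      rw [pow_zero]
      exact Matrix.one_apply_ne (by rintro rfl; omega)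
    | succ t ih =>
      intro k l hlt
      rw [pow_succ, Matrix.mul_apply]
      apply Finset.sum_eq_zero
      intro m _
      rcases Nat.lt_or_ge (w m) (w k + t) with h | h
      · rw [ih k m h, zero_mul]
      · rw [hz m l (by omega), mul_zero]
  ext k l
  rw [key T k l (by have := hwT l; omega)]
  simp

lemma idem_pow (W : Matrix (Fin n) (Fin n) (ZMod 2)) (hid : W * W = W) :
    ∀ t : ℕ, W ^ (t + 1) = W := by
  intro t
  induction t with
  | zero => rw [pow_one]
  | succ t ih => rw [pow_succ, ih, hid]

include hn hP hQ hS in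
lemma cert_zero (hid : Z * Z = Z) (h00 : ze Z 0 0 = 0) : Z = 0 := by
  have hnil : Z ^ n = 0 := by
    apply pow_wt_zero Z (fun k => wgt n k.val) n
    · intro k
      have := k.isLt
      simp only [wgt]
      split_ifs <;> omega
    · exact fun k l h => allZero hn hP hQ hS h00 k l h
  have hp := idem_pow Z hid
  rcases Nat.eq_zero_or_pos n with h0 | h0
  · ext k l
    exact absurd k.isLt (by omega)
  · calc Z = Z ^ (n - 1 + 1) := (hp (n - 1)).symm
    _ = Z ^ n := by congr 1; omega
    _ = 0 := hnil

include hn hP hQ hS in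
lemma cert (hn0 : 0 < n) (hid : Z * Z = Z) : Z = 0 ∨ Z = 1 := by
  by_cases hc : ze Z 0 0 = 0
  · exact Or.inl (cert_zero hn hP hQ hS hid hc)
  · right
    set Z' : Matrix (Fin n) (Fin n) (ZMod 2) := 1 + Z with hZ'
    have hsum : ∀ W : Matrix (Fin n) (Fin n) (ZMod 2), W + W = 0 := by
      intro W; ext k l
      simp only [Matrix.add_apply, Matrix.zero_apply]
      exact CharTwo.add_self_eq_zero _
    have hP' : Z' * Pma n = Pma n * Z' := by
      rw [hZ', add_mul, mul_add, one_mul, mul_one, hP]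
    have hQ' : Z' * Qma n = Qma n * Z' := by
      rw [hZ', add_mul, mul_add, one_mul, mul_one, hQ]
    have hS' : Z'ᵀ * mat0 n = mat0 n * Z' := by
      rw [hZ', Matrix.transpose_add, Matrix.transpose_one, add_mul, mul_add, one_mul, mul_one, hS]
    have hid' : Z' * Z' = Z' := by
      have h2Z : Z + Z = 0 := hsum Z
      rw [hZ']
      calc (1 + Z) * (1 + Z) = 1 + (Z + Z) + Z * Z := by noncomm_ring
      _ = 1 + Z := by rw [h2Z, add_zero, hid]
    have h00' : ze Z' 0 0 = 0 := by
      have h1 : ze Z 0 0 = 1 := by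
        have : ∀ x : ZMod 2, x ≠ 0 → x = 1 := by decide
        exact this _ hc
      rw [ze_in Z' hn0 hn0, hZ', Matrix.add_apply, Matrix.one_apply_eq, ← ze_in Z hn0 hn0, h1]
      decide
    have hzero := cert_zero hn hP' hQ' hS' hid' h00'
    have h11 : (1 : Matrix (Fin n) (Fin n) (ZMod 2)) + 1 = 0 := hsum 1
    have h2 : (1 : Matrix (Fin n) (Fin n) (ZMod 2)) + (1 + Z) = 1 + 0 := by
      rw [← hZ', hzero]
    rwa [← add_assoc, h11, zero_add, add_zero] at h2

end Cert

section Identities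
variable {n : ℕ}

/-- commutation matrix of the path graph cluster state for residue class `r` -/
def Cm (n : ℕ) (r : ℕ) : Matrix (Fin n) (Fin n) (ZMod 2) :=
  fun k l => ((if k.val % 4 = r then 1 else 0) + (if l.val % 4 = r then 1 else 0)) *
    (if k.val + 1 = l.val ∨ l.val + 1 = k.val then 1 else 0)

lemma mat0_mul_mat0 (hn : n % 2 = 0) : mat0 n * mat0 n = 1 := by
  ext k l
  rcases Nat.mod_two_eq_zero_or_one k.val with hk | hk
  · have h1 : k.val + 1 < n := by have := k.isLt; omega
    rw [row_mul_one (mat0 n) (mat0_row_even hk h1)]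
    simp only [mat0, Matrix.one_apply, Fin.ext_iff]
    split_ifs <;> first | rfl | decide | (exfalso; omega)
  · have h0 : 0 < k.val := by omega
    rw [row_mul_one (mat0 n) (mat0_row_odd (j := ⟨k.val - 1, by omega⟩) hk (by show k.val - 1 + 1 = k.val; omega))]
    simp only [mat0, Matrix.one_apply, Fin.ext_iff]
    split_ifs <;> first | rfl | decide | (exfalso; omega)

lemma cm12_eq_mat0 : Cm n 1 + Cm n 2 = mat0 n := by
  ext k l
  simp only [Matrix.add_apply, Cm, mat0]
  split_ifs <;> first | rfl | decide | (exfalso; omega)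

lemma mat0_mul_cm1 (hn : n % 2 = 0) : mat0 n * Cm n 1 = Pma n := by
  ext k l
  rcases Nat.mod_two_eq_zero_or_one k.val with hk | hk
  · have h1 : k.val + 1 < n := by have := k.isLt; omega
    rw [row_mul_one (Cm n 1) (mat0_row_even hk h1)]
    simp only [Cm, Pma, Fin.ext_iff]
    have := l.isLt
    split_ifs <;> first | rfl | decide | (exfalso; omega)
  · have h0 : 0 < k.val := by omega
    rw [row_mul_one (Cm n 1) (mat0_row_odd (j := ⟨k.val - 1, by omega⟩) hk (by show k.val - 1 + 1 = k.val; omega))]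
    simp only [Cm, Pma, Fin.ext_iff]
    have := l.isLt
    split_ifs <;> first | rfl | decide | (exfalso; omega)

lemma mat0_mul_cm0 (hn : n % 4 = 0) : mat0 n * Cm n 0 = Qma n := by
  ext k l
  rcases Nat.mod_two_eq_zero_or_one k.val with hk | hk
  · have h1 : k.val + 1 < n := by have := k.isLt; omega
    rw [row_mul_one (Cm n 0) (mat0_row_even hk h1)]
    simp only [Cm, Qma, Fin.ext_iff]
    have := l.isLt
    have := k.isLt
    split_ifs <;> first | rfl | decide | (exfalso; omega)
  · have h0 : 0 < k.val := by omega
    rw [row_mul_one (Cm n 0) (mat0_row_odd (j := ⟨k.val - 1, by omega⟩) hk (by show k.val - 1 + 1 = k.val; omega))]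
    simp only [Cm, Qma, Fin.ext_iff]
    have := l.isLt
    have := k.isLt
    split_ifs <;> first | rfl | decide | (exfalso; omega)

end Identities

section BlockDiag
variable {n : ℕ}

/-- cross-block-vanishing (block-diagonal) matrices -/
def IsBD (n₁ : ℕ) (W : Matrix (Fin n) (Fin n) (ZMod 2)) : Prop :=
  ∀ k l : Fin n, ((k.val < n₁ ∧ n₁ ≤ l.val) ∨ (l.val < n₁ ∧ n₁ ≤ k.val)) → W k l = 0

lemma isBD_one (n₁ : ℕ) : IsBD (n := n) n₁ 1 := by
  intro k l h
  apply Matrix.one_apply_ne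
  intro hkl
  subst hkl
  omega

lemma isBD_add {n₁ : ℕ} {W W' : Matrix (Fin n) (Fin n) (ZMod 2)}
    (h : IsBD n₁ W) (h' : IsBD n₁ W') : IsBD n₁ (W + W') := by
  intro k l hc
  rw [Matrix.add_apply, h k l hc, h' k l hc, add_zero]

lemma isBD_mul {n₁ : ℕ} {W W' : Matrix (Fin n) (Fin n) (ZMod 2)}
    (h : IsBD n₁ W) (h' : IsBD n₁ W') : IsBD n₁ (W * W') := by
  intro k l hc
  rw [Matrix.mul_apply]
  apply Finset.sum_eq_zero
  intro m _
  rcases Nat.lt_or_ge m.val n₁ with hm | hm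
  · rcases hc with hc | hc
    · rw [h' m l (Or.inl ⟨hm, hc.2⟩), mul_zero]
    · rw [h k m (Or.inr ⟨hm, hc.2⟩), zero_mul]
  · rcases hc with hc | hc
    · rw [h k m (Or.inl ⟨hc.1, hm⟩), zero_mul]
    · rw [h' m l (Or.inr ⟨hc.1, hm⟩), mul_zero]

/-- the submodule of block-diagonal matrices -/
def bdSub (n n₁ : ℕ) : Submodule (ZMod 2) (Matrix (Fin n) (Fin n) (ZMod 2)) where
  carrier := {W | IsBD n₁ W}
  add_mem' := fun h h' => isBD_add h h'
  zero_mem' := fun k l _ => rfl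
  smul_mem' := by
    intro c W h k l hc
    rw [Matrix.smul_apply, h k l hc, smul_zero]

/-- a unit that is block diagonal has a block diagonal (two-sided) inverse -/
lemma bd_inverse {n₁ : ℕ} {G : Matrix (Fin n) (Fin n) (ZMod 2)}
    (hG : IsBD n₁ G) (hGu : IsUnit G) :
    ∃ H : Matrix (Fin n) (Fin n) (ZMod 2), IsBD n₁ H ∧ G * H = 1 ∧ H * G = 1 := by
  obtain ⟨Gi, hGi⟩ := hGu.exists_right_inv
  have hGi' : Gi * G = 1 := mul_eq_one_comm.mp hGi
  -- multiplication by G on the submodule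
  let L : bdSub n n₁ →ₗ[ZMod 2] bdSub n n₁ :=
    { toFun := fun x => ⟨G * x.val, isBD_mul hG x.2⟩
      map_add' := by intro x y; apply Subtype.ext; simp [Matrix.mul_add]
      map_smul' := by intro c x; apply Subtype.ext; simp [Matrix.mul_smul] }
  have hinj : Function.Injective L := by
    intro x y hxy
    apply Subtype.ext
    have h1 : G * x.val = G * y.val := congrArg Subtype.val hxy
    calc x.val = (Gi * G) * x.val := by rw [hGi', one_mul]
    _ = Gi * (G * y.val) := by rw [Matrix.mul_assoc, h1]
    _ = (Gi * G) * y.val := by rw [Matrix.mul_assoc]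
    _ = y.val := by rw [hGi', one_mul]
  have hsurj : Function.Surjective L := (LinearMap.injective_iff_surjective).mp hinj
  obtain ⟨x, hx⟩ := hsurj ⟨1, isBD_one n₁⟩
  have hx1 : G * x.val = 1 := congrArg Subtype.val hx
  exact ⟨x.val, x.2, hx1, mul_eq_one_comm.mp hx1⟩

/-- the coordinate projection onto the first `n₁` coordinates -/
def piD (n n₁ : ℕ) : Matrix (Fin n) (Fin n) (ZMod 2) :=
  fun k l => if k = l ∧ k.val < n₁ then 1 else 0

lemma piD_symm (n₁ : ℕ) : (piD n n₁)ᵀ = piD n n₁ := by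
  ext k l
  simp only [Matrix.transpose_apply, piD]
  by_cases h : k = l
  · subst h; rfl
  · rw [if_neg (by intro hc; exact h hc.1.symm), if_neg (by intro hc; exact h hc.1)]

lemma piD_row_lt {n₁ : ℕ} {k : Fin n} (hk : k.val < n₁) :
    ∀ m, piD n n₁ k m = if m = k then 1 else 0 := by
  intro m
  simp only [piD]
  by_cases h : m = k
  · subst h; rw [if_pos ⟨rfl, hk⟩, if_pos rfl]
  · rw [if_neg (by intro hc; exact h hc.1.symm), if_neg h]

lemma piD_row_ge {n₁ : ℕ} {k : Fin n} (hk : ¬ k.val < n₁) :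
    ∀ m, piD n n₁ k m = 0 := by
  intro m
  simp only [piD]
  rw [if_neg (by intro hc; exact hk hc.2)]

lemma piD_col_lt {n₁ : ℕ} {l : Fin n} (hl : l.val < n₁) :
    ∀ m, piD n n₁ m l = if m = l then 1 else 0 := by
  intro m
  simp only [piD]
  by_cases h : m = l
  · subst h; rw [if_pos ⟨rfl, hl⟩, if_pos rfl]
  · rw [if_neg (by intro hc; exact h hc.1), if_neg h]

lemma piD_col_ge {n₁ : ℕ} {l : Fin n} (hl : ¬ l.val < n₁) :
    ∀ m, piD n n₁ m l = 0 := by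
  intro m
  simp only [piD]
  rw [if_neg (by intro hc; exact hl (hc.1 ▸ hc.2))]

lemma piD_idem (n₁ : ℕ) : piD n n₁ * piD n n₁ = piD n n₁ := by
  ext k l
  by_cases hl : l.val < n₁
  · rw [mul_col_one (piD n n₁) (piD_col_lt hl)]
  · rw [mul_col_zero (piD n n₁) (piD_col_ge hl)]
    exact (piD_col_ge hl k).symm

lemma isBD_comm_piD {n₁ : ℕ} {W : Matrix (Fin n) (Fin n) (ZMod 2)} (h : IsBD n₁ W) :
    W * piD n n₁ = piD n n₁ * W := by
  ext k l
  by_cases hl : l.val < n₁ <;> by_cases hk : k.val < n₁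
  · rw [mul_col_one W (piD_col_lt hl), row_mul_one W (piD_row_lt hk)]
  · rw [mul_col_one W (piD_col_lt hl), row_mul_zero W (piD_row_ge hk)]
    exact h k l (Or.inr ⟨hl, by omega⟩)
  · rw [mul_col_zero W (piD_col_ge hl), row_mul_one W (piD_row_lt hk)]
    exact (h k l (Or.inl ⟨hk, by omega⟩)).symm
  · rw [mul_col_zero W (piD_col_ge hl), row_mul_zero W (piD_row_ge hk)]

end BlockDiag

section NoDecomp

lemma not_decomp {M : ℕ} (hM : 4 ≤ M) {n : ℕ} (hn : n % 4 = 0) (hn0 : 0 < n) :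
    ¬ Decomposable (fun j : Fin M => Cm n j.val) := by
  rintro ⟨n₁, n₂, hn₁, hn₂, hsum, Qm, hQu, hz⟩
  have h2 : n % 2 = 0 := by omega
  have hB : ∀ r : ℕ, r < 4 → IsBD n₁ (Qm * Cm n r * Qmᵀ) := by
    intro r hr k l hc
    exact hz ⟨r, by omega⟩ k l hc
  have hGbd : IsBD n₁ (Qm * mat0 n * Qmᵀ) := by
    have he : Qm * mat0 n * Qmᵀ = Qm * Cm n 1 * Qmᵀ + Qm * Cm n 2 * Qmᵀ := by
      rw [← cm12_eq_mat0, Matrix.mul_add, Matrix.add_mul]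
    rw [he]
    exact isBD_add (hB 1 (by omega)) (hB 2 (by omega))
  obtain ⟨Qi, hQi⟩ := hQu.exists_right_inv
  have hQi' : Qi * Qm = 1 := mul_eq_one_comm.mp hQi
  have htQQ : Qmᵀ * Qiᵀ = 1 := by rw [← Matrix.transpose_mul, hQi', Matrix.transpose_one]
  have htQQ' : Qiᵀ * Qmᵀ = 1 := by rw [← Matrix.transpose_mul, hQi, Matrix.transpose_one]
  have hM0 : mat0 n * mat0 n = 1 := mat0_mul_mat0 h2
  have cQ : ∀ X : Matrix (Fin n) (Fin n) (ZMod 2), Qi * (Qm * X) = X := by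
    intro X; rw [← Matrix.mul_assoc, hQi', Matrix.one_mul]
  have cQ' : ∀ X : Matrix (Fin n) (Fin n) (ZMod 2), Qm * (Qi * X) = X := by
    intro X; rw [← Matrix.mul_assoc, hQi, Matrix.one_mul]
  have cT : ∀ X : Matrix (Fin n) (Fin n) (ZMod 2), Qmᵀ * (Qiᵀ * X) = X := by
    intro X; rw [← Matrix.mul_assoc, htQQ, Matrix.one_mul]
  have cT' : ∀ X : Matrix (Fin n) (Fin n) (ZMod 2), Qiᵀ * (Qmᵀ * X) = X := by
    intro X; rw [← Matrix.mul_assoc, htQQ', Matrix.one_mul]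
  have cM : ∀ X : Matrix (Fin n) (Fin n) (ZMod 2), mat0 n * (mat0 n * X) = X := by
    intro X; rw [← Matrix.mul_assoc, hM0, Matrix.one_mul]
  have cPi : ∀ X : Matrix (Fin n) (Fin n) (ZMod 2), piD n n₁ * (piD n n₁ * X) = piD n n₁ * X := by
    intro X; rw [← Matrix.mul_assoc, piD_idem]
  have hx : (Qm * mat0 n * Qmᵀ) * (Qiᵀ * (mat0 n * Qi)) = 1 := by
    simp only [Matrix.mul_assoc, cT, cM]
    exact cQ' Qi ▸ (by rw [cQ' Qi]; exact hQi)
  have hGu : IsUnit (Qm * mat0 n * Qmᵀ) :=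
    ⟨⟨Qm * mat0 n * Qmᵀ, Qiᵀ * (mat0 n * Qi), hx, mul_eq_one_comm.mp hx⟩, rfl⟩
  obtain ⟨H, hHbd, hGH, hHG⟩ := bd_inverse hGbd hGu
  have hHeq : H = Qiᵀ * (mat0 n * Qi) := by
    calc H = H * ((Qm * mat0 n * Qmᵀ) * (Qiᵀ * (mat0 n * Qi))) := by rw [hx, Matrix.mul_one]
    _ = (H * (Qm * mat0 n * Qmᵀ)) * (Qiᵀ * (mat0 n * Qi)) := (Matrix.mul_assoc _ _ _).symm
    _ = Qiᵀ * (mat0 n * Qi) := by rw [hHG, Matrix.one_mul]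
  have hTP : IsBD n₁ (Qiᵀ * (Pma n * Qmᵀ)) := by
    have h' := isBD_mul hHbd (hB 1 (by omega))
    have he : H * (Qm * Cm n 1 * Qmᵀ) = Qiᵀ * (Pma n * Qmᵀ) := by
      rw [hHeq, ← mat0_mul_cm1 h2]
      simp only [Matrix.mul_assoc, cQ]
    rwa [he] at h'
  have hTQ : IsBD n₁ (Qiᵀ * (Qma n * Qmᵀ)) := by
    have h' := isBD_mul hHbd (hB 0 (by omega))
    have he : H * (Qm * Cm n 0 * Qmᵀ) = Qiᵀ * (Qma n * Qmᵀ) := by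
      rw [hHeq, ← mat0_mul_cm0 hn]
      simp only [Matrix.mul_assoc, cQ]
    rwa [he] at h'
  set Zc : Matrix (Fin n) (Fin n) (ZMod 2) := Qmᵀ * (piD n n₁ * Qiᵀ) with hZc
  have hZP : Zc * Pma n = Pma n * Zc := by
    have h' := isBD_comm_piD hTP
    have h2' := congrArg (fun X => Qmᵀ * X * Qiᵀ) h'
    simp only [Matrix.mul_assoc, cT] at h2'
    rw [htQQ, Matrix.mul_one] at h2'
    rw [hZc]
    simp only [Matrix.mul_assoc]
    exact h2'.symm
  have hZQ : Zc * Qma n = Qma n * Zc := by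
    have h' := isBD_comm_piD hTQ
    have h2' := congrArg (fun X => Qmᵀ * X * Qiᵀ) h'
    simp only [Matrix.mul_assoc, cT] at h2'
    rw [htQQ, Matrix.mul_one] at h2'
    rw [hZc]
    simp only [Matrix.mul_assoc]
    exact h2'.symm
  have hZS : Zcᵀ * mat0 n = mat0 n * Zc := by
    have h' := isBD_comm_piD hGbd
    have h2' := congrArg (fun X => Qi * X * Qiᵀ) h'
    simp only [Matrix.mul_assoc, cQ] at h2'
    rw [htQQ, Matrix.mul_one] at h2'
    rw [hZc]
    simp only [Matrix.transpose_mul, Matrix.transpose_transpose, piD_symm, Matrix.mul_assoc]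
    exact h2'.symm
  have hZid : Zc * Zc = Zc := by
    rw [hZc]
    simp only [Matrix.mul_assoc, cT', cPi]
  rcases cert hn hZP hZQ hZS hn0 hZid with h0 | h1
  · rw [hZc] at h0
    have hpi : piD n n₁ = 0 := by
      have h3 := congrArg (fun X => Qiᵀ * X * Qmᵀ) h0
      simp only [Matrix.mul_assoc, cT', Matrix.mul_zero, Matrix.zero_mul, htQQ',
        Matrix.mul_one] at h3
      exact h3
    have h4 : piD n n₁ ⟨0, hn0⟩ ⟨0, hn0⟩ = 0 := by rw [hpi]; rfl
    rw [piD, if_pos ⟨rfl, hn₁⟩] at h4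
    exact one_ne_zero h4
  · rw [hZc] at h1
    have hpi : piD n n₁ = 1 := by
      have h3 := congrArg (fun X => Qiᵀ * X * Qmᵀ) h1
      simp only [Matrix.mul_assoc, cT', Matrix.one_mul, htQQ', Matrix.mul_one] at h3
      exact h3
    have hlt : n₁ < n := by omega
    have h4 : piD n n₁ ⟨n₁, hlt⟩ ⟨n₁, hlt⟩ = 1 := by rw [hpi]; exact Matrix.one_apply_eq _
    rw [piD, if_neg (by intro hc; exact absurd hc.2 (by simp))] at h4
    exact zero_ne_one h4

end NoDecomp

section Construction
variable {n : ℕ}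

/-- adjacency of the path graph -/
def adjF (n : ℕ) (k i : Fin n) : ZMod 2 :=
  if k.val + 1 = i.val ∨ i.val + 1 = k.val then 1 else 0

/-- the graph-state basis vectors -/
def fvec (n : ℕ) (k : Fin n) : PV n :=
  (fun i => if i = k then 1 else 0, fun i => adjF n k i)

lemma adjF_symm (k l : Fin n) : adjF n k l = adjF n l k := by
  simp only [adjF]
  split_ifs <;> first | rfl | (exfalso; omega)

/-- the parties -/
def party (n : ℕ) {M : ℕ} (j : Fin M) : Finset (Fin n) :=
  univ.filter (fun i => i.val % 4 = j.val)

lemma symp_fvec (k l : Fin n) : symp (fvec n k) (fvec n l) = 0 := by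
  simp only [symp, fvec]
  have hterm : ∀ i : Fin n,
      ((if i = k then (1 : ZMod 2) else 0) * adjF n l i + adjF n k i * (if i = l then 1 else 0))
      = (if i = k then adjF n l i else 0) + (if i = l then adjF n k i else 0) := by
    intro i
    split_ifs <;> ring1
  rw [Finset.sum_congr rfl (fun i _ => hterm i), Finset.sum_add_distrib,
    Finset.sum_ite_eq' univ k, Finset.sum_ite_eq' univ l]
  simp only [mem_univ, if_true]
  rw [adjF_symm l k]
  exact CharTwo.add_self_eq_zero _

lemma sympOn_fvec {M : ℕ} (j : Fin M) (k l : Fin n) :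
    sympOn (party n j) (fvec n k) (fvec n l) = Cm n j.val k l := by
  simp only [sympOn, symp, restr, fvec]
  have hterm : ∀ i : Fin n,
      ((if i ∈ party n j then (if i = k then (1:ZMod 2) else 0) else 0) *
        (if i ∈ party n j then adjF n l i else 0) +
       (if i ∈ party n j then adjF n k i else 0) *
        (if i ∈ party n j then (if i = l then 1 else 0) else 0))
      = (if i = k then (if i ∈ party n j then adjF n l i else 0) else 0) +
        (if i = l then (if i ∈ party n j then adjF n k i else 0) else 0) := by
    intro i
    split_ifs <;> first | ring1 | tauto
  rw [Finset.sum_congr rfl (fun i _ => hterm i), Finset.sum_add_distrib,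
    Finset.sum_ite_eq' univ k, Finset.sum_ite_eq' univ l]
  simp only [mem_univ, if_true]
  simp only [Cm, adjF, party, mem_filter, mem_univ, true_and]
  split_ifs <;> first | (exfalso; omega) | ring1 | tauto

lemma symp_comm (f g : PV n) : symp f g = symp g f := by
  simp only [symp]
  exact Finset.sum_congr rfl fun i _ => by ring

lemma symp_add_left (f g h : PV n) : symp (f + g) h = symp f h + symp g h := by
  simp only [symp, Prod.fst_add, Prod.snd_add, Pi.add_apply]
  rw [← Finset.sum_add_distrib]
  exact Finset.sum_congr rfl fun i _ => by ring

lemma symp_smul_left (c : ZMod 2) (f h : PV n) : symp (c • f) h = c * symp f h := by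
  simp only [symp, Prod.smul_fst, Prod.smul_snd, Pi.smul_apply, smul_eq_mul, Finset.mul_sum]
  exact Finset.sum_congr rfl fun i _ => by ring

lemma symp_zero_left (h : PV n) : symp 0 h = 0 := by
  simp [symp]

lemma isotropic_span :
    ∀ x ∈ Submodule.span (ZMod 2) (Set.range (fvec n)),
    ∀ y ∈ Submodule.span (ZMod 2) (Set.range (fvec n)), symp x y = 0 := by
  have h1 : ∀ k : Fin n, ∀ y ∈ Submodule.span (ZMod 2) (Set.range (fvec n)),
      symp (fvec n k) y = 0 := by
    intro k y hy
    induction hy using Submodule.span_induction with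
    | mem z hz =>
      obtain ⟨l, rfl⟩ := hz
      exact symp_fvec k l
    | zero => rw [symp_comm]; exact symp_zero_left _
    | add u v _ _ hu hv =>
      rw [symp_comm, symp_add_left, symp_comm u, symp_comm v, hu, hv, add_zero]
    | smul c u _ hu =>
      rw [symp_comm, symp_smul_left, symp_comm u, hu, mul_zero]
  intro x hx y hy
  induction hx using Submodule.span_induction with
  | mem z hz =>
    obtain ⟨l, rfl⟩ := hz
    exact h1 l y hy
  | zero => exact symp_zero_left _
  | add u v _ _ hu hv => rw [symp_add_left, hu, hv, add_zero]
  | smul c u _ hu => rw [symp_smul_left, hu, mul_zero]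

lemma fvec_indep : LinearIndependent (ZMod 2) (fvec n) := by
  apply LinearIndependent.of_comp (LinearMap.fst (ZMod 2) (Fin n → ZMod 2) (Fin n → ZMod 2))
  have he : (⇑(LinearMap.fst (ZMod 2) (Fin n → ZMod 2) (Fin n → ZMod 2)) ∘ fvec n)
      = fun k => (Pi.single k (1 : ZMod 2) : Fin n → ZMod 2) := by
    funext k i
    simp [fvec, Pi.single_apply]
  rw [he]
  have := (Pi.basisFun (ZMod 2) (Fin n)).linearIndependent
  have he2 : ⇑(Pi.basisFun (ZMod 2) (Fin n)) = fun k => (Pi.single k (1 : ZMod 2) : Fin n → ZMod 2) := by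
    funext k
    exact Pi.basisFun_apply _ _ _
  rwa [he2] at this

lemma fvec_finrank :
    Module.finrank (ZMod 2) (Submodule.span (ZMod 2) (Set.range (fvec n))) = n := by
  rw [finrank_span_eq_card fvec_indep, Fintype.card_fin]

end Construction

/-- The entanglement generating set `EGS_M` is infinite for every `M ≥ 4`: for every
bound `N` there is an `M`-partite stabilizer state on `n ≥ N` qubits whose tuple of
commutation matrices is indecomposable under simultaneous congruence. -/
theorem egs_infinite (M : ℕ) (hM : 4 ≤ M) (N : ℕ) :
    ∃ (n : ℕ), N ≤ n ∧
      ∃ (α : Fin M → Finset (Fin n)),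
        (∀ j k, j ≠ k → Disjoint (α j) (α k)) ∧
        (∀ i : Fin n, ∃ j, i ∈ α j) ∧
        ∃ (V : Submodule (ZMod 2) (PV n)) (f : Fin n → PV n),
          MaxIsotropic V ∧ IsBasisFam V f ∧
          ¬ Decomposable (fun j : Fin M => fun k l : Fin n =>
              sympOn (α j) (f k) (f l)) := by
  refine ⟨4 * (N + 1), by omega, fun j => party (4 * (N + 1)) j, ?_, ?_, ?_⟩
  · intro j k hjk
    rw [Finset.disjoint_left]
    intro i hij hik
    simp only [party, mem_filter, mem_univ, true_and] at hij hik
    exact hjk (Fin.ext (by omega))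
  · intro i
    refine ⟨⟨i.val % 4, by omega⟩, ?_⟩
    simp [party]
  · refine ⟨Submodule.span (ZMod 2) (Set.range (fvec (4 * (N + 1)))), fvec (4 * (N + 1)),
      ⟨isotropic_span, fvec_finrank⟩,
      ⟨fun k => Submodule.subset_span (Set.mem_range_self k), fvec_indep, rfl⟩, ?_⟩
    have he : (fun j : Fin M => fun k l : Fin (4 * (N + 1)) =>
        sympOn (party (4 * (N + 1)) j) (fvec (4 * (N + 1)) k) (fvec (4 * (N + 1)) l))
        = fun j : Fin M => Cm (4 * (N + 1)) j.val := by
      funext j k l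
      exact sympOn_fvec j k l
    rw [he]
    exact not_decomp hM (by omega) (by omega)

end Stmt5
end

section
/- Let n ≥ 1, let m = 4n, let Γ be the m×m adjacency matrix of the path graph over ZMod 2 (Γ_{ij} = 1 if |i − j| = 1, else 0), and partition {1, …, m} into the four parties α_j = {i : i ≡ j (mod 4)}, j ∈ {1, 2, 3, 4}. For x ∈ (ZMod 2)^m define the party support PS(x) = {j ∈ {1,2,3,4} : there exists i ∈ α_j with x_i ≠ 0 or (Γx)_i ≠ 0}. Then for every nonzero x ∈ (ZMod 2)^m one has |PS(x)| ≥ 2, and |PS(x)| = 2 if and only if x = e_1 or x = e_m, where e_1 and e_m are standard basis vectors. -/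
open Matrix

namespace Stmt14

/-- Adjacency matrix of the path graph on `m` vertices over `ZMod 2`. -/
def pathAdj (m : ℕ) : Matrix (Fin m) (Fin m) (ZMod 2) :=
  fun i j => if i.val + 1 = j.val ∨ j.val + 1 = i.val then 1 else 0

/-- The party support `PS(x)` of `x ∈ (ZMod 2)^m` for the 4-partite spiral partition
(vertex `i`, 0-based, belongs to party `p`, 0-based, iff `i ≡ p (mod 4)`): the set of
parties `p` containing a vertex `i` with `x_i ≠ 0` or `(Γx)_i ≠ 0`. -/
def PS {m : ℕ} (Γ : Matrix (Fin m) (Fin m) (ZMod 2)) (x : Fin m → ZMod 2) :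
    Finset (Fin 4) :=
  Finset.univ.filter (fun p =>
    ∃ i : Fin m, i.val % 4 = p.val ∧ (x i ≠ 0 ∨ Γ.mulVec x i ≠ 0))

/-! ### Auxiliary machinery -/

/-- extension of `x` to `ℕ` by zero. -/
def ext' {m : ℕ} (x : Fin m → ZMod 2) (k : ℕ) : ZMod 2 :=
  if h : k < m then x ⟨k, h⟩ else 0

lemma ext'_eq {m : ℕ} (x : Fin m → ZMod 2) (i : Fin m) : ext' x i.val = x i := by
  simp [ext']

lemma ext'_ge {m : ℕ} (x : Fin m → ZMod 2) (k : ℕ) (h : m ≤ k) : ext' x k = 0 := by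
  simp [ext', not_lt.mpr h]

lemma mulVec_pathAdj {m : ℕ} (x : Fin m → ZMod 2) (i : Fin m) :
    (pathAdj m).mulVec x i =
      ext' x (i.val + 1) + (if 1 ≤ i.val then ext' x (i.val - 1) else 0) := by
  have h1 : (∑ j : Fin m, if i.val + 1 = j.val then x j else 0) = ext' x (i.val + 1) := by
    by_cases h : i.val + 1 < m
    · rw [ext', dif_pos h, Finset.sum_eq_single (⟨i.val + 1, h⟩ : Fin m)]
      · simp
      · intro b _ hb
        rw [if_neg]
        intro hc; exact hb (Fin.ext hc.symm)
      · simp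
    · rw [ext', dif_neg h]
      apply Finset.sum_eq_zero
      intro j _
      rw [if_neg]
      have := j.isLt; omega
  have h2 : (∑ j : Fin m, if j.val + 1 = i.val then x j else 0) =
      (if 1 ≤ i.val then ext' x (i.val - 1) else 0) := by
    by_cases h : 1 ≤ i.val
    · have hlt : i.val - 1 < m := by have := i.isLt; omega
      rw [if_pos h, ext', dif_pos hlt, Finset.sum_eq_single (⟨i.val - 1, hlt⟩ : Fin m)]
      · simp; omega
      · intro b _ hb
        rw [if_neg]
        intro hc
        exact hb (Fin.ext (by simp; omega))
      · simp
    · rw [if_neg h]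
      apply Finset.sum_eq_zero
      intro j _
      rw [if_neg]; omega
  rw [← h1, ← h2, Matrix.mulVec, ← Finset.sum_add_distrib]
  apply Finset.sum_congr rfl
  intro j _
  by_cases hA : i.val + 1 = j.val
  · have hB : ¬ (j.val + 1 = i.val) := by omega
    simp [pathAdj, dotProduct, hA, hB]
  · by_cases hB : j.val + 1 = i.val <;> simp [pathAdj, dotProduct, hA, hB]

lemma zmod2_add_eq_zero {a b : ZMod 2} (h : a + b = 0) : a = b := by
  revert h; revert a b; decide

/-- Extraction of facts from `p ∉ PS`. -/
lemma forb {m : ℕ} {x : Fin m → ZMod 2} {p : Fin 4}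
    (hp : p ∉ PS (pathAdj m) x) :
    (∀ k, k % 4 = p.val → ext' x k = 0) ∧
    (∀ k, 1 ≤ k → k < m → k % 4 = p.val → ext' x (k + 1) = ext' x (k - 1)) ∧
    (p.val = 0 → 0 < m → ext' x 1 = 0) := by
  simp only [PS, Finset.mem_filter, Finset.mem_univ, true_and, not_exists, not_and,
    not_or, not_not] at hp
  have hp' : ∀ i : Fin m, i.val % 4 = p.val → x i = 0 ∧ (pathAdj m).mulVec x i = 0 := by
    intro i hi
    have := hp i hi
    exact this
  refine ⟨?_, ?_, ?_⟩
  · intro k hk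
    by_cases h : k < m
    · rw [ext', dif_pos h]; exact (hp' ⟨k, h⟩ hk).1
    · exact ext'_ge x k (by omega)
  · intro k h1 h2 hk
    have := (hp' ⟨k, h2⟩ hk).2
    rw [mulVec_pathAdj, if_pos h1] at this
    exact zmod2_add_eq_zero this
  · intro hp0 hm
    have := (hp' ⟨0, hm⟩ (by simpa using hp0.symm)).2
    rw [mulVec_pathAdj] at this
    simpa using this

section cases
variable {m : ℕ} {X : ℕ → ZMod 2}

/-- forbidden residues 2, 3 : support only at 0 -/
lemma L23 (hm4 : m % 4 = 0) (hm : 4 ≤ m) (htop : ∀ k, m ≤ k → X k = 0)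
    (hX2 : ∀ k, k % 4 = 2 → X k = 0) (hX3 : ∀ k, k % 4 = 3 → X k = 0)
    (hc2 : ∀ k, 1 ≤ k → k < m → k % 4 = 2 → X (k + 1) = X (k - 1))
    (hc3 : ∀ k, 1 ≤ k → k < m → k % 4 = 3 → X (k + 1) = X (k - 1)) :
    ∀ k, 1 ≤ k → X k = 0 := by
  intro k hk
  by_cases hkm : m ≤ k
  · exact htop k hkm
  push_neg at hkm
  rcases (by omega : k % 4 = 0 ∨ k % 4 = 1 ∨ k % 4 = 2 ∨ k % 4 = 3) with h | h | h | h
  · have h4 : 4 ≤ k := by omega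
    have := hc3 (k - 1) (by omega) (by omega) (by omega)
    rw [(by omega : k - 1 + 1 = k), (by omega : k - 1 - 1 = k - 2)] at this
    rw [this]
    exact hX2 (k - 2) (by omega)
  · have := hc2 (k + 1) (by omega) (by omega) (by omega)
    rw [(by omega : k + 1 - 1 = k)] at this
    rw [← this]
    exact hX3 (k + 2) (by omega)
  · exact hX2 k h
  · exact hX3 k h

/-- forbidden residues 0, 1 : support only at m-1 -/
lemma L01 (hm4 : m % 4 = 0) (hm : 4 ≤ m) (htop : ∀ k, m ≤ k → X k = 0)
    (hX0 : ∀ k, k % 4 = 0 → X k = 0) (hX1 : ∀ k, k % 4 = 1 → X k = 0)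
    (hc0 : ∀ k, 1 ≤ k → k < m → k % 4 = 0 → X (k + 1) = X (k - 1))
    (hc1 : ∀ k, 1 ≤ k → k < m → k % 4 = 1 → X (k + 1) = X (k - 1)) :
    ∀ k, k ≠ m - 1 → X k = 0 := by
  intro k hk
  by_cases hkm : m ≤ k
  · exact htop k hkm
  push_neg at hkm
  rcases (by omega : k % 4 = 0 ∨ k % 4 = 1 ∨ k % 4 = 2 ∨ k % 4 = 3) with h | h | h | h
  · exact hX0 k h
  · exact hX1 k h
  · have := hc1 (k - 1) (by omega) (by omega) (by omega)
    rw [(by omega : k - 1 + 1 = k), (by omega : k - 1 - 1 = k - 2)] at this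
    rw [this]
    exact hX0 (k - 2) (by omega)
  · have hk5 : k + 4 < m := by omega
    have := hc0 (k + 1) (by omega) (by omega) (by omega)
    rw [(by omega : k + 1 - 1 = k)] at this
    rw [← this]
    exact hX1 (k + 2) (by omega)

/-- forbidden residues 1, 3 : x = 0 -/
lemma L13 (hm4 : m % 4 = 0) (hm : 4 ≤ m) (htop : ∀ k, m ≤ k → X k = 0)
    (hX1 : ∀ k, k % 4 = 1 → X k = 0) (hX3 : ∀ k, k % 4 = 3 → X k = 0)
    (hc1 : ∀ k, 1 ≤ k → k < m → k % 4 = 1 → X (k + 1) = X (k - 1))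
    (hc3 : ∀ k, 1 ≤ k → k < m → k % 4 = 3 → X (k + 1) = X (k - 1)) :
    ∀ k, X k = 0 := by
  have key : ∀ t k, m ≤ k + 2 * t → k % 2 = 0 → X k = 0 := by
    intro t
    induction t with
    | zero => intro k hk _; exact htop k (by omega)
    | succ t ih =>
      intro k hk he
      by_cases hkm : m ≤ k
      · exact htop k hkm
      push_neg at hkm
      have hch : X (k + 1 + 1) = X (k + 1 - 1) := by
        rcases (by omega : (k + 1) % 4 = 1 ∨ (k + 1) % 4 = 3) with h | h
        · exact hc1 (k + 1) (by omega) (by omega) h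
        · exact hc3 (k + 1) (by omega) (by omega) h
      rw [(by omega : k + 1 - 1 = k)] at hch
      rw [← hch]
      exact ih (k + 2) (by omega) (by omega)
  intro k
  rcases (by omega : k % 2 = 0 ∨ k % 4 = 1 ∨ k % 4 = 3) with h | h | h
  · exact key m k (by omega) h
  · exact hX1 k h
  · exact hX3 k h

/-- forbidden residues 0, 2 : x = 0 -/
lemma L02 (hm4 : m % 4 = 0) (hm : 4 ≤ m) (htop : ∀ k, m ≤ k → X k = 0)
    (hX0 : ∀ k, k % 4 = 0 → X k = 0) (hX2 : ∀ k, k % 4 = 2 → X k = 0)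
    (hb : X 1 = 0)
    (hc0 : ∀ k, 1 ≤ k → k < m → k % 4 = 0 → X (k + 1) = X (k - 1))
    (hc2 : ∀ k, 1 ≤ k → k < m → k % 4 = 2 → X (k + 1) = X (k - 1)) :
    ∀ k, X k = 0 := by
  have key : ∀ k, k % 2 = 1 → X k = 0 := by
    intro k
    induction k using Nat.strong_induction_on with
    | _ k ih =>
      intro hodd
      by_cases hkm : m ≤ k
      · exact htop k hkm
      push_neg at hkm
      rcases (by omega : k = 1 ∨ 3 ≤ k) with rfl | h3
      · exact hb
      have hch : X (k - 1 + 1) = X (k - 1 - 1) := by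
        rcases (by omega : (k - 1) % 4 = 0 ∨ (k - 1) % 4 = 2) with h | h
        · exact hc0 (k - 1) (by omega) (by omega) h
        · exact hc2 (k - 1) (by omega) (by omega) h
      rw [(by omega : k - 1 + 1 = k), (by omega : k - 1 - 1 = k - 2)] at hch
      rw [hch]
      exact ih (k - 2) (by omega) (by omega)
  intro k
  rcases (by omega : k % 2 = 1 ∨ k % 4 = 0 ∨ k % 4 = 2) with h | h | h
  · exact key k h
  · exact hX0 k h
  · exact hX2 k h

/-- forbidden residues 1, 2 : x = 0 -/
lemma L12 (hm4 : m % 4 = 0) (hm : 4 ≤ m) (htop : ∀ k, m ≤ k → X k = 0)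
    (hX1 : ∀ k, k % 4 = 1 → X k = 0) (hX2 : ∀ k, k % 4 = 2 → X k = 0)
    (hc1 : ∀ k, 1 ≤ k → k < m → k % 4 = 1 → X (k + 1) = X (k - 1))
    (hc2 : ∀ k, 1 ≤ k → k < m → k % 4 = 2 → X (k + 1) = X (k - 1)) :
    ∀ k, X k = 0 := by
  intro k
  by_cases hkm : m ≤ k
  · exact htop k hkm
  push_neg at hkm
  rcases (by omega : k % 4 = 0 ∨ k % 4 = 1 ∨ k % 4 = 2 ∨ k % 4 = 3) with h | h | h | h
  · have := hc1 (k + 1) (by omega) (by omega) (by omega)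
    rw [(by omega : k + 1 - 1 = k)] at this
    rw [← this]
    exact hX2 (k + 2) (by omega)
  · exact hX1 k h
  · exact hX2 k h
  · have := hc2 (k - 1) (by omega) (by omega) (by omega)
    rw [(by omega : k - 1 + 1 = k), (by omega : k - 1 - 1 = k - 2)] at this
    rw [this]
    exact hX1 (k - 2) (by omega)

/-- forbidden residues 0, 3 : x = 0 -/
lemma L03 (hm4 : m % 4 = 0) (hm : 4 ≤ m) (htop : ∀ k, m ≤ k → X k = 0)
    (hX0 : ∀ k, k % 4 = 0 → X k = 0) (hX3 : ∀ k, k % 4 = 3 → X k = 0)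
    (hb : X 1 = 0)
    (hc0 : ∀ k, 1 ≤ k → k < m → k % 4 = 0 → X (k + 1) = X (k - 1))
    (hc3 : ∀ k, 1 ≤ k → k < m → k % 4 = 3 → X (k + 1) = X (k - 1)) :
    ∀ k, X k = 0 := by
  intro k
  by_cases hkm : m ≤ k
  · exact htop k hkm
  push_neg at hkm
  rcases (by omega : k % 4 = 0 ∨ k % 4 = 1 ∨ k % 4 = 2 ∨ k % 4 = 3) with h | h | h | h
  · exact hX0 k h
  · rcases (by omega : k = 1 ∨ 5 ≤ k) with rfl | h5
    · exact hb
    · have := hc0 (k - 1) (by omega) (by omega) (by omega)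
      rw [(by omega : k - 1 + 1 = k), (by omega : k - 1 - 1 = k - 2)] at this
      rw [this]
      exact hX3 (k - 2) (by omega)
  · have := hc3 (k + 1) (by omega) (by omega) (by omega)
    rw [(by omega : k + 1 - 1 = k)] at this
    rw [← this]
    exact hX0 (k + 2) (by omega)
  · exact hX3 k h

end cases

lemma three_le {P : Finset (Fin 4)} {a b c : Fin 4} (ha : a ∈ P) (hb : b ∈ P)
    (hc : c ∈ P) (hab : a ≠ b) (hac : a ≠ c) (hbc : b ≠ c) : 3 ≤ P.card := by
  have hsub : ({a, b, c} : Finset (Fin 4)) ⊆ P := by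
    intro t ht
    simp only [Finset.mem_insert, Finset.mem_singleton] at ht
    rcases ht with rfl | rfl | rfl <;> assumption
  have h2 := Finset.card_le_card hsub
  rwa [Finset.card_insert_of_notMem (by simp [hab, hac]),
    Finset.card_insert_of_notMem (by simp [hbc]), Finset.card_singleton] at h2

lemma ext'_e0 {m : ℕ} (hm : 0 < m) (k : ℕ) :
    ext' (fun i : Fin m => if i.val = 0 then 1 else 0) k = if k = 0 then 1 else 0 := by
  unfold ext'
  by_cases h : k < m
  · rw [dif_pos h]
  · rw [dif_neg h, if_neg (by omega)]

lemma ext'_em1 {m : ℕ} (hm : 0 < m) (k : ℕ) :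
    ext' (fun i : Fin m => if i.val = m - 1 then 1 else 0) k =
      if k = m - 1 then 1 else 0 := by
  unfold ext'
  by_cases h : k < m
  · rw [dif_pos h]
  · rw [dif_neg h, if_neg (by omega)]

lemma PS_e0 {m : ℕ} (hm4 : m % 4 = 0) (hm : 4 ≤ m) :
    PS (pathAdj m) (fun i : Fin m => if i.val = 0 then 1 else 0) = {0, 1} := by
  have hm0 : 0 < m := by omega
  ext p
  simp only [PS, Finset.mem_filter, Finset.mem_univ, true_and]
  fin_cases p
  · simp only [Finset.mem_insert, Finset.mem_singleton]
    constructor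
    · intro _; left; rfl
    · intro _
      exact ⟨⟨0, hm0⟩, by simp, Or.inl (by simp)⟩
  · simp only [Finset.mem_insert, Finset.mem_singleton]
    constructor
    · intro _; right; rfl
    · intro _
      refine ⟨⟨1, by omega⟩, by simp, Or.inr ?_⟩
      rw [mulVec_pathAdj]
      simp only [ext'_e0 hm0]
      norm_num
  · constructor
    · rintro ⟨i, hi, hc⟩
      exfalso
      have hiv : i.val % 4 = 2 := hi
      rcases hc with hc | hc
      · exact hc (if_neg (by omega))
      · apply hc
        rw [mulVec_pathAdj]
        simp only [ext'_e0 hm0]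
        rw [if_neg (by omega), if_pos (by omega : 1 ≤ i.val), if_neg (by omega)]
        simp
    · intro h; exact absurd h (by decide)
  · constructor
    · rintro ⟨i, hi, hc⟩
      exfalso
      have hiv : i.val % 4 = 3 := hi
      rcases hc with hc | hc
      · exact hc (if_neg (by omega))
      · apply hc
        rw [mulVec_pathAdj]
        simp only [ext'_e0 hm0]
        rw [if_neg (by omega), if_pos (by omega : 1 ≤ i.val), if_neg (by omega)]
        simp
    · intro h; exact absurd h (by decide)

lemma PS_em1 {m : ℕ} (hm4 : m % 4 = 0) (hm : 4 ≤ m) :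
    PS (pathAdj m) (fun i : Fin m => if i.val = m - 1 then 1 else 0) = {2, 3} := by
  have hm0 : 0 < m := by omega
  ext p
  simp only [PS, Finset.mem_filter, Finset.mem_univ, true_and]
  fin_cases p
  · constructor
    · rintro ⟨i, hi, hc⟩
      exfalso
      have hiv : i.val % 4 = 0 := hi
      have hilt := i.isLt
      rcases hc with hc | hc
      · exact hc (if_neg (by omega))
      · apply hc
        rw [mulVec_pathAdj]
        simp only [ext'_em1 hm0]
        rw [if_neg (by omega)]
        by_cases h1 : 1 ≤ i.val
        · rw [if_pos h1, if_neg (by omega)]; simp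
        · rw [if_neg h1]; simp
    · intro h; exact absurd h (by decide)
  · constructor
    · rintro ⟨i, hi, hc⟩
      exfalso
      have hiv : i.val % 4 = 1 := hi
      have hilt := i.isLt
      rcases hc with hc | hc
      · exact hc (if_neg (by omega))
      · apply hc
        rw [mulVec_pathAdj]
        simp only [ext'_em1 hm0]
        rw [if_neg (by omega), if_pos (by omega : 1 ≤ i.val), if_neg (by omega)]
        simp
    · intro h; exact absurd h (by decide)
  · simp only [Finset.mem_insert, Finset.mem_singleton]
    constructor
    · intro _; left; rfl
    · intro _
      refine ⟨⟨m - 2, by omega⟩, show (m - 2) % 4 = 2 by omega, Or.inr ?_⟩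
      rw [mulVec_pathAdj]
      simp only [ext'_em1 hm0]
      rw [if_pos (show m - 2 + 1 = m - 1 by omega),
        if_pos (show 1 ≤ m - 2 by omega), if_neg (show ¬(m - 2 - 1 = m - 1) by omega)]
      norm_num
  · simp only [Finset.mem_insert, Finset.mem_singleton]
    constructor
    · intro _; right; rfl
    · intro _
      refine ⟨⟨m - 1, by omega⟩, show (m - 1) % 4 = 3 by omega, Or.inl ?_⟩
      simp

/-- Lemma F.2: every nonzero stabilizer element of the 4-partite spiral graph state
`G_{4n}` has party support of size at least 2, with equality exactly for the two
canonical generators `g_1` and `g_{4n}` (i.e. `x = e_1` or `x = e_{4n}`). -/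
theorem spiral_party_support (n : ℕ) (hn : 1 ≤ n) (x : Fin (4 * n) → ZMod 2)
    (hx : x ≠ 0) :
    2 ≤ (PS (pathAdj (4 * n)) x).card ∧
      ((PS (pathAdj (4 * n)) x).card = 2 ↔
        (x = fun i => if i.val = 0 then 1 else 0) ∨
          (x = fun i => if i.val = 4 * n - 1 then 1 else 0)) := by
  have hm4 : (4 * n) % 4 = 0 := by omega
  have hm : 4 ≤ 4 * n := by omega
  have hone : ∀ a : ZMod 2, a ≠ 0 → a = 1 := by decide
  obtain ⟨i0, hi0⟩ : ∃ i, x i ≠ 0 := by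
    by_contra h
    push_neg at h
    exact hx (funext fun i => h i)
  -- the six structural keys
  have key01 : (2 : Fin 4) ∉ PS (pathAdj (4 * n)) x → (3 : Fin 4) ∉ PS (pathAdj (4 * n)) x →
      x = fun i => if i.val = 0 then 1 else 0 := by
    intro h2 h3
    obtain ⟨hX2, hc2, -⟩ := forb h2
    obtain ⟨hX3, hc3, -⟩ := forb h3
    have hz : ∀ k, 1 ≤ k → ext' x k = 0 := L23 hm4 hm (ext'_ge x) hX2 hX3 hc2 hc3
    have hzz : ∀ i : Fin (4 * n), i.val ≠ 0 → x i = 0 := by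
      intro i hi
      rw [← ext'_eq x i]
      exact hz i.val (by omega)
    have hi0v : i0.val = 0 := by
      by_contra h
      exact hi0 (hzz i0 h)
    funext j
    by_cases hj : j.val = 0
    · rw [if_pos hj]
      have : j = i0 := Fin.ext (by omega)
      rw [this]
      exact hone _ hi0
    · rw [if_neg hj]
      exact hzz j hj
  have key23 : (0 : Fin 4) ∉ PS (pathAdj (4 * n)) x → (1 : Fin 4) ∉ PS (pathAdj (4 * n)) x →
      x = fun i => if i.val = 4 * n - 1 then 1 else 0 := by
    intro h0 h1
    obtain ⟨hX0, hc0, -⟩ := forb h0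
    obtain ⟨hX1, hc1, -⟩ := forb h1
    have hz : ∀ k, k ≠ 4 * n - 1 → ext' x k = 0 := L01 hm4 hm (ext'_ge x) hX0 hX1 hc0 hc1
    have hzz : ∀ i : Fin (4 * n), i.val ≠ 4 * n - 1 → x i = 0 := by
      intro i hi
      rw [← ext'_eq x i]
      exact hz i.val hi
    have hi0v : i0.val = 4 * n - 1 := by
      by_contra h
      exact hi0 (hzz i0 h)
    funext j
    by_cases hj : j.val = 4 * n - 1
    · rw [if_pos hj]
      have : j = i0 := Fin.ext (by omega)
      rw [this]
      exact hone _ hi0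
    · rw [if_neg hj]
      exact hzz j hj
  have xzero : (∀ k, ext' x k = 0) → False := by
    intro h
    apply hx
    funext i
    rw [← ext'_eq x i, h i.val]
    rfl
  have key13 : (1 : Fin 4) ∉ PS (pathAdj (4 * n)) x → (3 : Fin 4) ∉ PS (pathAdj (4 * n)) x →
      False := by
    intro h1 h3
    obtain ⟨hX1, hc1, -⟩ := forb h1
    obtain ⟨hX3, hc3, -⟩ := forb h3
    exact xzero (L13 hm4 hm (ext'_ge x) hX1 hX3 hc1 hc3)
  have key02 : (0 : Fin 4) ∉ PS (pathAdj (4 * n)) x → (2 : Fin 4) ∉ PS (pathAdj (4 * n)) x →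
      False := by
    intro h0 h2
    obtain ⟨hX0, hc0, hb0⟩ := forb h0
    obtain ⟨hX2, hc2, -⟩ := forb h2
    exact xzero (L02 hm4 hm (ext'_ge x) hX0 hX2 (hb0 rfl (by omega)) hc0 hc2)
  have key12 : (1 : Fin 4) ∉ PS (pathAdj (4 * n)) x → (2 : Fin 4) ∉ PS (pathAdj (4 * n)) x →
      False := by
    intro h1 h2
    obtain ⟨hX1, hc1, -⟩ := forb h1
    obtain ⟨hX2, hc2, -⟩ := forb h2
    exact xzero (L12 hm4 hm (ext'_ge x) hX1 hX2 hc1 hc2)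
  have key03 : (0 : Fin 4) ∉ PS (pathAdj (4 * n)) x → (3 : Fin 4) ∉ PS (pathAdj (4 * n)) x →
      False := by
    intro h0 h3
    obtain ⟨hX0, hc0, hb0⟩ := forb h0
    obtain ⟨hX3, hc3, -⟩ := forb h3
    exact xzero (L03 hm4 hm (ext'_ge x) hX0 hX3 (hb0 rfl (by omega)) hc0 hc3)
  have hge2 : 2 ≤ (PS (pathAdj (4 * n)) x).card := by
    by_contra hlt
    push_neg at hlt
    have pair : ∀ p q : Fin 4, p ≠ q →
        p ∉ PS (pathAdj (4 * n)) x ∨ q ∉ PS (pathAdj (4 * n)) x := by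
      intro p q hpq
      by_contra h
      push_neg at h
      have := Finset.one_lt_card.mpr ⟨p, h.1, q, ⟨h.2, hpq⟩⟩
      omega
    rcases pair 1 3 (by decide) with h1 | h3
    · rcases pair 0 2 (by decide) with h0 | h2
      · rcases pair 2 3 (by decide) with h2 | h3
        · exact key12 h1 h2
        · exact key03 h0 h3
      · exact key12 h1 h2
    · rcases pair 0 2 (by decide) with h0 | h2
      · exact key03 h0 h3
      · rcases pair 0 1 (by decide) with h0 | h1
        · exact key02 h0 h2
        · exact key13 h1 h3
  refine ⟨hge2, ?_, ?_⟩
  · intro hcard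
    by_cases h0 : (0 : Fin 4) ∈ PS (pathAdj (4 * n)) x <;>
      by_cases h1 : (1 : Fin 4) ∈ PS (pathAdj (4 * n)) x <;>
      by_cases h2 : (2 : Fin 4) ∈ PS (pathAdj (4 * n)) x <;>
      by_cases h3 : (3 : Fin 4) ∈ PS (pathAdj (4 * n)) x
    all_goals first
      | exact Or.inl (key01 h2 h3)
      | exact Or.inr (key23 h0 h1)
      | exact (key13 h1 h3).elim
      | exact (key02 h0 h2).elim
      | exact (key12 h1 h2).elim
      | exact (key03 h0 h3).elim
      | exact absurd hcard
          (by have := three_le h0 h1 h2 (by decide) (by decide) (by decide); omega)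
      | exact absurd hcard
          (by have := three_le h0 h1 h3 (by decide) (by decide) (by decide); omega)
      | exact absurd hcard
          (by have := three_le h0 h2 h3 (by decide) (by decide) (by decide); omega)
      | exact absurd hcard
          (by have := three_le h1 h2 h3 (by decide) (by decide) (by decide); omega)
  · rintro (rfl | rfl)
    · rw [PS_e0 hm4 hm]; decide
    · rw [PS_em1 hm4 hm]; decide

end Stmt14
end

section
/- Let F be a field, let (A_i)_{i∈[M]} be a tuple of n×n matrices over F, and let W be an n×n matrix over F with W·A_i = A_i·Wᵀ for all i ∈ [M] and W^{2l+1} = 1 for some natural number l. Then W is invertible, W^{l+1} is invertible, and W·A_i = W^{l+1}·A_i·(W^{l+1})ᵀ for all i ∈ [M]; in particular, the tuple (W·A_i)_{i∈[M]} is simultaneously congruent to (A_i)_{i∈[M]}. -/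
open Matrix

namespace Stmt15

/-- Simultaneous congruence of two tuples of square matrices. -/
def SimCongruent {F : Type*} [CommRing F] {ι : Type*} {k : ℕ}
    (A B : ι → Matrix (Fin k) (Fin k) F) : Prop :=
  ∃ Q : Matrix (Fin k) (Fin k) F, IsUnit Q ∧ ∀ i, Q * A i * Qᵀ = B i

/-- A self-adjoint endomorphism `W` of a tuple `(A_i)` with `W^{2l+1} = 1` is invertible,
`W^{l+1}` is invertible, `W A_i = W^{l+1} A_i (W^{l+1})ᵀ`, and the tuple `(W A_i)` is
simultaneously congruent to `(A_i)`. -/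
theorem odd_order_endomorphism_congruence {F : Type*} [Field F]
    (M n l : ℕ) (A : Fin M → Matrix (Fin n) (Fin n) F)
    (W : Matrix (Fin n) (Fin n) F)
    (hend : ∀ i, W * A i = A i * Wᵀ)
    (hord : W ^ (2 * l + 1) = 1) :
    IsUnit W ∧ IsUnit (W ^ (l + 1)) ∧
      (∀ i, W * A i = W ^ (l + 1) * A i * (W ^ (l + 1))ᵀ) ∧
      SimCongruent (fun i => W * A i) A := by
  have hW : IsUnit W := by
    have h1 : W * W ^ (2 * l) = 1 := by rw [← pow_succ', hord]
    have h2 : W ^ (2 * l) * W = 1 := by rw [← pow_succ, hord]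
    exact ⟨⟨W, W ^ (2 * l), h1, h2⟩, rfl⟩
  have hpow : ∀ (k : ℕ) i, W ^ k * A i = A i * (W ^ k)ᵀ := by
    intro k i
    induction k with
    | zero => simp
    | succ m ih =>
      rw [pow_succ, mul_assoc, hend, ← mul_assoc, ih, mul_assoc, ← transpose_mul,
        ← pow_succ', ← pow_succ]
  have key : ∀ i, W * A i = W ^ (l + 1) * A i * (W ^ (l + 1))ᵀ := by
    intro i
    rw [mul_assoc, ← hpow, ← mul_assoc, ← pow_add]
    have : l + 1 + (l + 1) = 2 * l + 1 + 1 := by ring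
    rw [this, pow_succ, hord, one_mul]
  refine ⟨hW, hW.pow _, key, W ^ l, hW.pow _, fun i => ?_⟩
  show W ^ l * (W * A i) * (W ^ l)ᵀ = A i
  rw [key i, ← mul_assoc, ← mul_assoc, ← pow_add, mul_assoc, ← transpose_mul, ← pow_add]
  have h1 : l + (l + 1) = 2 * l + 1 := by ring
  rw [h1, hord]
  simp

end Stmt15
end

section
/- Over ZMod 2, define 8×8 matrices A_1, A_2, A_3, A_4 whose entries are 1 exactly at the following positions and 0 elsewhere: A_1 at (1,2),(2,1),(4,5),(5,4),(5,6),(6,5); A_2 at (1,2),(2,1),(2,3),(3,2),(5,6),(6,5),(6,7),(7,6); A_3 at (2,3),(3,2),(3,4),(4,3),(6,7),(7,6),(7,8),(8,7); A_4 at (1,7),(7,1),(3,5),(5,3). Let P = I_8 + E_{2,6} + E_{4,8} + E_{5,1} + E_{7,3}, where E_{ij} denotes the matrix with a single 1 in position (i,j). Then each A_i is alternating, P is invertible, each P·A_i is alternating, but there exists no invertible matrix Q over ZMod 2 with Q·A_i·Qᵀ = P·A_i for all i ∈ {1,2,3,4}. -/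
open Matrix

namespace Stmt16

/-- An alternating square matrix. -/
def IsAltMat {F : Type*} [Ring F] {m : Type*} (A : Matrix m m F) : Prop :=
  Aᵀ = -A ∧ ∀ i, A i i = 0

/-- The four 8×8 matrices `A_1, …, A_4` over `ZMod 2` (entries given by the listed
1-based positions, here written 0-based). -/
def Aex : Fin 4 → Matrix (Fin 8) (Fin 8) (ZMod 2)
  | 0 => fun i j =>
      if ((i : ℕ), (j : ℕ)) ∈ ([(0,1),(1,0),(3,4),(4,3),(4,5),(5,4)] : List (ℕ × ℕ))
      then 1 else 0
  | 1 => fun i j =>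
      if ((i : ℕ), (j : ℕ)) ∈
          ([(0,1),(1,0),(1,2),(2,1),(4,5),(5,4),(5,6),(6,5)] : List (ℕ × ℕ))
      then 1 else 0
  | 2 => fun i j =>
      if ((i : ℕ), (j : ℕ)) ∈
          ([(1,2),(2,1),(2,3),(3,2),(5,6),(6,5),(6,7),(7,6)] : List (ℕ × ℕ))
      then 1 else 0
  | 3 => fun i j =>
      if ((i : ℕ), (j : ℕ)) ∈ ([(0,6),(6,0),(2,4),(4,2)] : List (ℕ × ℕ))
      then 1 else 0

/-- The matrix `P = I₈ + E_{2,6} + E_{4,8} + E_{5,1} + E_{7,3}` (1-based positions,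
here written with 0-based `stdBasisMatrix`). -/
def Pex : Matrix (Fin 8) (Fin 8) (ZMod 2) :=
  1 + Matrix.single 1 5 1 + Matrix.single 3 7 1 +
    Matrix.single 4 0 1 + Matrix.single 6 2 1

/-! If `Q Aᵢ Qᵀ = P Aᵢ` for all `i`, the same holds for every `A` in the span of the `Aᵢ`, and
then `x ↦ Qᵀ x` maps `ker A` into itself, because `Q A Qᵀ x = P A x`. The rows `u, w, z` of `Q`
with (0-based) indices 1, 4, 6 therefore lie in six such kernels, and these linear conditions
force `uᵀ A₁ w = 0`. But `uᵀ A₁ w` is the (1, 4) entry of `Q A₁ Qᵀ = P A₁`, which is 1. -/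

theorem mulVec_vecMul_eq_zero_of_mul_mul_transpose_eq {n R : Type*} [Fintype n] [DecidableEq n]
    [CommRing R] {Q P A : Matrix n n R} (hQ : IsUnit Q) (h : Q * A * Qᵀ = P * A)
    {x : n → R} (hx : A *ᵥ x = 0) : A *ᵥ (x ᵥ* Q) = 0 := by
  have hQx : Q *ᵥ (A *ᵥ (x ᵥ* Q)) = 0 := by
    rw [← mulVec_transpose, mulVec_mulVec, mulVec_mulVec, h, ← mulVec_mulVec, hx, mulVec_zero]
  rw [← one_mulVec (A *ᵥ _), ← nonsing_inv_mul Q ((isUnit_iff_isUnit_det Q).1 hQ),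
    ← mulVec_mulVec, hQx, mulVec_zero]

theorem mul_mul_transpose_apply {n R : Type*} [Fintype n] [NonUnitalSemiring R]
    (Q A : Matrix n n R) (i j : n) : (Q * A * Qᵀ) i j = Q i ⬝ᵥ (A *ᵥ Q j) := by
  rw [mul_apply', dotProduct_mulVec]
  rfl

theorem isAltMat_Aex (i : Fin 4) : IsAltMat (Aex i) := by
  fin_cases i <;> exact ⟨by decide, by decide⟩

theorem isAltMat_Pex_mul_Aex (i : Fin 4) : IsAltMat (Pex * Aex i) := by
  fin_cases i <;> exact ⟨by decide, by decide⟩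

theorem Pex_mul_self : Pex * Pex = 1 := by decide

theorem Aex_zero_mulVec (v : Fin 8 → ZMod 2) :
    Aex 0 *ᵥ v = ![v 1, v 0, 0, v 4, v 3 + v 5, v 4, 0, 0] := by
  ext j; fin_cases j <;> simp [mulVec, dotProduct, Fin.sum_univ_eight, Aex]

theorem Aex_one_mulVec (v : Fin 8 → ZMod 2) :
    Aex 1 *ᵥ v = ![v 1, v 0 + v 2, v 1, 0, v 5, v 4 + v 6, v 5, 0] := by
  ext j; fin_cases j <;> simp [mulVec, dotProduct, Fin.sum_univ_eight, Aex]

theorem Aex_two_mulVec (v : Fin 8 → ZMod 2) :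
    Aex 2 *ᵥ v = ![0, v 2, v 1 + v 3, v 2, 0, v 6, v 5 + v 7, v 6] := by
  ext j; fin_cases j <;> simp [mulVec, dotProduct, Fin.sum_univ_eight, Aex]

theorem Aex_three_mulVec (v : Fin 8 → ZMod 2) :
    Aex 3 *ᵥ v = ![v 6, 0, v 4, 0, v 2, 0, v 0, 0] := by
  ext j; fin_cases j <;> simp [mulVec, dotProduct, Fin.sum_univ_eight, Aex]

theorem dotProduct_Aex_zero_mulVec_eq_zero {u w z : Fin 8 → ZMod 2}
    (hu : Aex 3 *ᵥ u = 0) (hw : Aex 2 *ᵥ w = 0) (huw : (Aex 2 + Aex 3) *ᵥ (u + w) = 0)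
    (hwz : Aex 1 *ᵥ (w + z) = 0) (huwz : (Aex 1 + Aex 3) *ᵥ (u + w + z) = 0)
    (hz : Aex 0 *ᵥ z = 0) :
    u ⬝ᵥ (Aex 0 *ᵥ w) = 0 := by
  simp only [add_mulVec, Aex_one_mulVec, Aex_two_mulVec, Aex_three_mulVec, Aex_zero_mulVec,
    Pi.add_apply, cons_add_cons, empty_add_empty, cons_eq_zero_iff, zero_empty, add_zero, zero_add,
    and_true, true_and] at hu hw huw hwz huwz hz
  have hu3 : u 3 = 0 := by grind
  have hw4 : w 4 = u 1 := by grind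
  have hw0 : w 0 = u 5 := by grind
  -- what is left is `u 1 * u 5 + u 5 * u 1`, which vanishes in characteristic 2
  rw [Aex_zero_mulVec]
  simp only [dotProduct, Fin.sum_univ_eight, cons_val]
  grind

/-- Appendix H example: each `A_i` is alternating, `P` is invertible, each `P A_i` is
alternating, but the tuple `(P A_i)` is not simultaneously congruent to `(A_i)`:
simultaneous equivalence of tuples of alternating matrices over `ZMod 2` is strictly
more powerful than simultaneous congruence. -/
theorem equivalence_stronger_than_congruence :
    (∀ i, IsAltMat (Aex i)) ∧ IsUnit Pex ∧ (∀ i, IsAltMat (Pex * Aex i)) ∧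
      ¬ ∃ Q : Matrix (Fin 8) (Fin 8) (ZMod 2), IsUnit Q ∧
          ∀ i, Q * Aex i * Qᵀ = Pex * Aex i := by
  refine ⟨isAltMat_Aex, IsUnit.of_mul_eq_one _ Pex_mul_self, isAltMat_Pex_mul_Aex, ?_⟩
  rintro ⟨Q, hQ, h⟩
  have hsum (i j) : Q * (Aex i + Aex j) * Qᵀ = Pex * (Aex i + Aex j) := by
    rw [mul_add, add_mul, h, h, mul_add]
  have hker {A} (hA : Q * A * Qᵀ = Pex * A) {x} (hx : A *ᵥ x = 0) : A *ᵥ (x ᵥ* Q) = 0 :=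
    mulVec_vecMul_eq_zero_of_mul_mul_transpose_eq hQ hA hx
  have hrow (i : Fin 8) : Pi.single i 1 ᵥ* Q = Q i := single_one_vecMul i Q
  have h_one : Q 1 ⬝ᵥ (Aex 0 *ᵥ Q 4) = 1 := by
    rw [← mul_mul_transpose_apply, h]
    decide
  have h_zero : Q 1 ⬝ᵥ (Aex 0 *ᵥ Q 4) = 0 := by
    apply dotProduct_Aex_zero_mulVec_eq_zero (z := Q 6)
    · rw [← hrow]; exact hker (h 3) (by decide)
    · rw [← hrow]; exact hker (h 2) (by decide)
    · rw [← hrow, ← hrow, ← add_vecMul]; exact hker (hsum 2 3) (by rw [add_mulVec]; decide)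
    · rw [← hrow, ← hrow, ← add_vecMul]; exact hker (h 1) (by decide)
    · rw [← hrow, ← hrow, ← hrow, ← add_vecMul, ← add_vecMul]
      exact hker (hsum 1 3) (by rw [add_mulVec]; decide)
    · rw [← hrow]; exact hker (h 0) (by decide)
  exact one_ne_zero (h_one.symm.trans h_zero)

end Stmt16
end

section
/- Let Γ ∈ M_{5×5}(ZMod 2) be the adjacency matrix of the 5-cycle (Γ_{ij} = 1 if i − j ≡ ±1 (mod 5), else 0), and for j ∈ {1, …, 5} define C_j ∈ M_{5×5}(ZMod 2) by (C_j)_{ab} = Γ_{ab} if exactly one of a, b equals j, and (C_j)_{ab} = 0 otherwise. Then there exist no p ∈ {0, 1, …, 5}, no matrices K_1, …, K_5 ∈ M_{p×(5−p)}(ZMod 2), and no invertible Q ∈ M_{5×5}(ZMod 2) such that for every j, Q·C_j·Qᵀ equals the block matrix with upper-left p×p block 0, upper-right block K_j, lower-left block K_jᵀ, and lower-right (5−p)×(5−p) block 0. -/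
open Matrix

namespace Stmt17

/-- Adjacency matrix of the 5-cycle over `ZMod 2`: `Γ_{ij} = 1` iff `i − j ≡ ±1 (mod 5)`. -/
def cycAdj : Matrix (Fin 5) (Fin 5) (ZMod 2) :=
  fun i j => if (i.val + 1) % 5 = j.val ∨ (j.val + 1) % 5 = i.val then 1 else 0

/-- The commutation matrices of the 5-qubit ring graph state with one qubit per party:
`(C_j)_{ab} = Γ_{ab}` if exactly one of `a, b` equals `j`, else `0`. -/
def ringC (j : Fin 5) : Matrix (Fin 5) (Fin 5) (ZMod 2) :=
  fun a b => if (a = j ∧ b ≠ j) ∨ (b = j ∧ a ≠ j) then cycAdj a b else 0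

/-!
Write `e_j` for the `j`-th unit vector and `n_j = e_{j-1} + e_{j+1}` for the `j`-th row of `Γ`,
so that `C_j = e_j n_jᵀ + n_j e_jᵀ`. If the rows of `Q` indexed by a set `T` are pairwise
orthogonal for `C_j`, then some nonzero vector of the plane `span {e_j, n_j}` is orthogonal to
all of them. The five planes meet pairwise only in `0`, so this gives five distinct nonzero
vectors orthogonal to the rows in `T`; as `Q` is invertible there are only `2 ^ (5 - |T|) - 1`
such vectors, whence `|T| ≤ 2`. A neutral form has two blocks of sizes `p` and `5 - p`, each
indexing such a set of rows, which is impossible.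
-/

theorem exists_ne_zero_forall_mul_add_mul_eq_zero {ι R : Type*} [CommRing R] [Nontrivial R]
    (f g : ι → R) (h : ∀ i k, f i * g k + f k * g i = 0) :
    ∃ a b : R, (a ≠ 0 ∨ b ≠ 0) ∧ ∀ i, a * f i + b * g i = 0 := by
  by_cases hf : ∀ i, f i = 0
  · exact ⟨1, 0, .inl one_ne_zero, fun i => by simp [hf i]⟩
  obtain ⟨i₀, hi₀⟩ := not_forall.mp hf
  exact ⟨g i₀, f i₀, .inr hi₀, fun i => by linear_combination h i₀ i⟩

theorem card_lt_card_pow_of_forall_dotProduct_eq_zero {m ι K : Type*} [Fintype m]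
    [DecidableEq m] [Fintype ι] [CommRing K] [Fintype K] {Q : Matrix m m K} (hQ : IsUnit Q)
    (T : Finset m) {u : ι → m → K} (hu : Function.Injective u) (hu₀ : ∀ a, u a ≠ 0)
    (hT : ∀ a, ∀ i ∈ T, Q i ⬝ᵥ u a = 0) :
    Fintype.card ι < Fintype.card K ^ (Fintype.card m - T.card) := by
  have hT' : ∀ o : Option ι, ∀ i ∈ T, (Q *ᵥ o.elim 0 u) i = 0 := by
    rintro (_ | a) i hi
    exacts [by simp, hT a i hi]
  -- `Q *ᵥ ·` is injective and the vectors `Q *ᵥ u a` vanish on `T`, so they are determined by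
  -- their restriction to `Tᶜ`.
  let φ : Option ι → ↥Tᶜ → K := fun o i => (Q *ᵥ o.elim 0 u) i
  have hφ : Function.Injective φ := by
    refine fun o o' h => ?_
    have : o.elim 0 u = o'.elim 0 u := mulVec_injective_of_isUnit hQ <| funext fun i => by
      by_cases hi : i ∈ T
      · exact (hT' o i hi).trans (hT' o' i hi).symm
      · exact congrFun h ⟨i, Finset.mem_compl.2 hi⟩
    rcases o with _ | a <;> rcases o' with _ | b
    exacts [rfl, (hu₀ b this.symm).elim, (hu₀ a this).elim, congrArg _ (hu this)]
  have hcard := Fintype.card_le_of_injective φ hφ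
  rwa [Fintype.card_option, Fintype.card_fun, Fintype.card_coe, Finset.card_compl] at hcard

theorem ringC_eq_vecMulVec (j : Fin 5) :
    ringC j = vecMulVec (Pi.single j 1) (cycAdj j) + vecMulVec (cycAdj j) (Pi.single j 1) := by
  revert j
  decide

theorem dotProduct_ringC_mulVec (j : Fin 5) (x y : Fin 5 → ZMod 2) :
    x ⬝ᵥ ringC j *ᵥ y = x j * (cycAdj j ⬝ᵥ y) + y j * (cycAdj j ⬝ᵥ x) := by
  simp [ringC_eq_vecMulVec, add_mulVec, vecMulVec_mulVec, dotProduct_comm x]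
  ring

theorem eq_of_smul_single_add_smul_cycAdj_eq {j j' : Fin 5} {a b a' b' : ZMod 2}
    (h : a • Pi.single j 1 + b • cycAdj j = a' • Pi.single j' 1 + b' • cycAdj j')
    (hab : a ≠ 0 ∨ b ≠ 0) : j = j' := by
  revert j j' a b a' b'
  decide

theorem smul_single_add_smul_cycAdj_ne_zero {j : Fin 5} {a b : ZMod 2}
    (hab : a ≠ 0 ∨ b ≠ 0) : a • Pi.single j 1 + b • cycAdj j ≠ 0 := by
  revert j a b
  decide

theorem card_le_two_of_mul_ringC_mul_transpose_eq_zero {Q : Matrix (Fin 5) (Fin 5) (ZMod 2)}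
    (hQ : IsUnit Q) {T : Finset (Fin 5)}
    (hT : ∀ j, ∀ i ∈ T, ∀ k ∈ T, (Q * ringC j * Qᵀ) i k = 0) : T.card ≤ 2 := by
  have hplane : ∀ j, ∃ a b : ZMod 2, (a ≠ 0 ∨ b ≠ 0) ∧
      ∀ i ∈ T, Q i ⬝ᵥ (a • Pi.single j 1 + b • cycAdj j) = 0 := by
    intro j
    obtain ⟨a, b, hab, h⟩ := exists_ne_zero_forall_mul_add_mul_eq_zero
      (fun i : T => Q i j) (fun i : T => cycAdj j ⬝ᵥ Q i) fun i k => by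
        simpa [mul_mul_apply, dotProduct_ringC_mulVec] using hT j i i.2 k k.2
    refine ⟨a, b, hab, fun i hi => ?_⟩
    simpa [dotProduct_add, dotProduct_smul, dotProduct_comm] using h ⟨i, hi⟩
  choose a b hab hann using hplane
  have hcard : 5 < 2 ^ (5 - T.card) := by
    simpa using card_lt_card_pow_of_forall_dotProduct_eq_zero hQ T
      (fun j j' h => eq_of_smul_single_add_smul_cycAdj_eq h (hab j))
      (fun j => smul_single_add_smul_cycAdj_ne_zero (hab j)) hann
  by_contra! h
  have := Nat.pow_le_pow_right two_pos (show 5 - T.card ≤ 2 by omega)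
  omega

/-- The commutation matrices of the 5-qubit ring graph state are not simultaneously
congruent to a neutral tuple, i.e. to a tuple of the block form `[[0, K_j],[K_jᵀ, 0]]`. -/
theorem ring_not_congruent_to_neutral :
    ¬ ∃ (p : ℕ) (hp : p ≤ 5) (K : Fin 5 → Matrix (Fin p) (Fin (5 - p)) (ZMod 2))
        (Q : Matrix (Fin 5) (Fin 5) (ZMod 2)),
        IsUnit Q ∧
          ∀ j : Fin 5,
            Q * ringC j * Qᵀ =
              (Matrix.fromBlocks 0 (K j) (K j)ᵀ 0).submatrix
                (finSumFinEquiv.trans (finCongr (Nat.add_sub_cancel' hp))).symm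
                (finSumFinEquiv.trans (finCongr (Nat.add_sub_cancel' hp))).symm := by
  rintro ⟨p, hp, K, Q, hQ, hblk⟩
  set e := finSumFinEquiv.trans (finCongr (Nat.add_sub_cancel' hp))
  have hleft := card_le_two_of_mul_ringC_mul_transpose_eq_zero hQ
    (T := Finset.univ.map (Function.Embedding.inl.trans e.toEmbedding)) (by simp [hblk])
  have hright := card_le_two_of_mul_ringC_mul_transpose_eq_zero hQ
    (T := Finset.univ.map (Function.Embedding.inr.trans e.toEmbedding)) (by simp [hblk])
  simp only [Finset.card_map, Finset.card_univ, Fintype.card_fin] at hleft hright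
  omega

end Stmt17
end
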